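/- arXiv:1511.01618 — 3 statements merged into one kernel-verified Lean document; each statement's English description precedes it below -/
import Mathlib

section
/- Let W_n be the number of white balls at time n in a large-index urn (model M or model R) with 1/2 < Λ < 1, and let 𝒲_∞ be the almost sure limit of the martingale 𝒲_n := g_n(W_n − E[W_n]). Then 𝒲_∞ is Subgaussian: there exist constants c, C > 0 such that P(|𝒲_∞| ≥ t) ≤ C·e^{−c t²} for all t > 0. -/
open MeasureTheory ProbabilityTheory Filter Set Topology

noncomputable section

/-- Probability of drawing `k` white balls in a sample of size `m` from an urn with
`w` white and `b` black balls, drawing *without* replacement (model M). -/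
def sampleProbM (m k w b : ℕ) : ℝ :=
  (Nat.choose w k * Nat.choose b (m - k) : ℝ) / (Nat.choose (w + b) m : ℝ)

/-- Probability of drawing `k` white balls in a sample of size `m` from an urn with
`w` white and `b` black balls, drawing *with* replacement (model R). -/
def sampleProbR (m k w b : ℕ) : ℝ :=
  (Nat.choose m k : ℝ) * (w : ℝ) ^ k * (b : ℝ) ^ (m - k) / ((w : ℝ) + (b : ℝ)) ^ m

/-- A balanced affine tenable two-color urn scheme with multiple drawings.
`mdlM = true` is model M (sampling without replacement), `mdlM = false` is model R
(sampling with replacement).  `W n`, `B n` are the numbers of white and black balls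
after `n` draws (ℕ-valued, which encodes tenability), `R (n+1)` is the number of white
balls in the `(n+1)`-st sample, and `F` is the filtration generated by the draws. -/
structure UrnScheme {Ω : Type*} [m0 : MeasurableSpace Ω] (μ : Measure Ω)
    (mdlM : Bool) (m : ℕ) (a b : ℕ → ℤ) (σ : ℤ) (W0 B0 : ℕ)
    (W B : ℕ → Ω → ℕ) (R : ℕ → Ω → ℕ) (F : Filtration ℕ m0) : Prop where
  hm : 1 ≤ m
  hσ : 1 ≤ σ
  balanced : ∀ k ≤ m, a k + b k = σ
  affine : ∀ k ≤ m, a k = ((m : ℤ) - (k : ℤ)) * (a (m - 1) - a m) + a m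
  initW : ∀ ω, W 0 ω = W0
  initB : ∀ ω, B 0 ω = B0
  sampleLe : ∀ n ω, R (n + 1) ω ≤ m
  sampleFit : ∀ n ω, (if mdlM then m else 1) ≤ W n ω + B n ω
  dynW : ∀ n ω, (W (n + 1) ω : ℤ) = (W n ω : ℤ) + a (m - R (n + 1) ω)
  dynB : ∀ n ω, (B (n + 1) ω : ℤ) = (B n ω : ℤ) + b (m - R (n + 1) ω)
  measW : ∀ n, Measurable[F n] (W n)
  measB : ∀ n, Measurable[F n] (B n)
  measR : ∀ n, Measurable[F (n + 1)] (R (n + 1))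
  condLaw : ∀ n, ∀ k ≤ m,
      (μ[(({ω | R (n + 1) ω = k}).indicator fun _ => (1 : ℝ)) | F n])
        =ᵐ[μ] fun ω =>
          if mdlM then sampleProbM m k (W n ω) (B n ω)
          else sampleProbR m k (W n ω) (B n ω)

/-- The urn index `Λ = m (a_{m-1} - a_m) / σ`. -/
def urnIndex (m : ℕ) (a : ℕ → ℤ) (σ : ℤ) : ℝ :=
  (m : ℝ) * ((a (m - 1) : ℝ) - (a m : ℝ)) / (σ : ℝ)

/-- `ζ = a_m / (1 - Λ)`. -/
def urnZeta (m : ℕ) (a : ℕ → ℤ) (σ : ℤ) : ℝ :=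
  (a m : ℝ) / (1 - urnIndex m a σ)

/-- `Q = Γ(T₀/σ + Λ) / Γ(T₀/σ)`. -/
def urnQ (T0 : ℕ) (σ : ℤ) (Λ : ℝ) : ℝ :=
  Real.Gamma ((T0 : ℝ) / (σ : ℝ) + Λ) / Real.Gamma ((T0 : ℝ) / (σ : ℝ))

/-- `g_n = Q · Γ(n + T₀/σ) / Γ(n + T₀/σ + Λ)`. -/
def urnG (T0 : ℕ) (σ : ℤ) (Λ : ℝ) (n : ℕ) : ℝ :=
  urnQ T0 σ Λ * Real.Gamma ((n : ℝ) + (T0 : ℝ) / (σ : ℝ)) /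
    Real.Gamma ((n : ℝ) + (T0 : ℝ) / (σ : ℝ) + Λ)

/-- Convergence in distribution of the sequence `X n` (on `(Ω, μ)`) to the law `ν`,
i.e. weak convergence of the image measures. -/
def TendstoInDistribution {Ω : Type*} [MeasurableSpace Ω] (μ : Measure Ω)
    (X : ℕ → Ω → ℝ) (ν : Measure ℝ) : Prop :=
  ∀ f : BoundedContinuousFunction ℝ ℝ,
    Tendsto (fun n => ∫ ω, f (X n ω) ∂μ) atTop (𝓝 (∫ x, f x ∂ν))

/-- The martingale `𝒲_n = g_n (W_n - E[W_n])` for large-index urns. -/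
def calW {Ω : Type*} [MeasurableSpace Ω] (μ : Measure Ω) (σ : ℤ) (Λ : ℝ) (T0 : ℕ)
    (W : ℕ → Ω → ℕ) (n : ℕ) (ω : Ω) : ℝ :=
  urnG T0 σ Λ n * ((W n ω : ℝ) - ∫ ω', (W n ω' : ℝ) ∂μ)

/-- The scaling constant `α = ((1-Λ)/(QΛ)) √(m(2Λ-1)/(a_m b_0))`. -/
def alphaConst (m : ℕ) (a b : ℕ → ℤ) (σ : ℤ) (T0 : ℕ) : ℝ :=
  (1 - urnIndex m a σ) / (urnQ T0 σ (urnIndex m a σ) * urnIndex m a σ) *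
    Real.sqrt ((m : ℝ) * (2 * urnIndex m a σ - 1) / ((a m : ℝ) * (b 0 : ℝ)))

/-!
Whether the sample is drawn with or without replacement, the number `R (n+1)` of white balls in
it has conditional mean `m W n / T n`, where `T n = T₀ + σ n` is deterministic. Hence `𝒲` is a
martingale with increments `g (n+1) (a_{m-1} - a_m) (R (n+1) - m W n / T n)`, bounded by
`m |a_{m-1} - a_m| g (n+1)`. Since `g n ≤ (T₀/σ)^Λ (n + T₀/σ)^(-Λ)` and `2Λ > 1`, these bounds are
square-summable, so the Azuma–Hoeffding argument bounds the moment generating functions of all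
`𝒲 n` by one Gaussian one. By Fatou's lemma the bound passes to the almost sure limit `𝒲_∞`, and
the Chernoff bound gives the sub-Gaussian tail.
-/

open Finset in
lemma add_mul_sum_mul_choose_mul_choose (w b m : ℕ) :
    (w + b) * ∑ k ∈ range (m + 1), k * (w.choose k * b.choose (m - k))
      = m * w * (w + b).choose m := by
  cases m with
  | zero => simp
  | succ M =>
    have hshift : ∑ k ∈ range (M + 2), k * (w.choose k * b.choose (M + 1 - k))
        = w * (w - 1 + b).choose M := by
      rw [sum_range_succ', Nat.add_choose_eq, Nat.sum_antidiagonal_eq_sum_range_succ_mk,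
        mul_sum, zero_mul, add_zero]
      refine sum_congr rfl fun j _ => ?_
      obtain _ | v := w
      · simp
      · rw [Nat.add_sub_cancel, Nat.add_sub_add_right, ← mul_assoc,
          mul_comm (j + 1), ← Nat.add_one_mul_choose_eq, mul_assoc]
    rw [hshift]
    obtain _ | v := w
    · simp
    · rw [show v + 1 - 1 + b = v + b by omega, show v + 1 + b = v + b + 1 by omega,
        mul_left_comm, Nat.add_one_mul_choose_eq]
      ring

lemma sum_mul_sampleProbM (m w b : ℕ) (h : m ≤ w + b) :
    ∑ k ∈ Finset.range (m + 1), (k : ℝ) * sampleProbM m k w b = m * w / (w + b) := by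
  rcases Nat.eq_zero_or_pos m with rfl | hm
  · simp
  have hT : (0 : ℝ) < w + b := by exact_mod_cast hm.trans_le h
  have hC : (0 : ℝ) < (w + b).choose m := by exact_mod_cast Nat.choose_pos h
  have key : ((w + b : ℕ) : ℝ) * ∑ k ∈ Finset.range (m + 1),
      (k : ℝ) * ((w.choose k : ℝ) * (b.choose (m - k) : ℝ)) = m * w * (w + b).choose m := by
    exact_mod_cast add_mul_sum_mul_choose_mul_choose w b m
  simp only [sampleProbM, mul_div_assoc', ← Finset.sum_div]
  rw [div_eq_div_iff hC.ne' hT.ne']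
  push_cast at key
  linarith

open Finset in
lemma sum_mul_choose_mul_pow_mul_pow {R : Type*} [CommSemiring R] (x y : R) (m : ℕ) :
    ∑ k ∈ range (m + 1), (k : R) * (m.choose k * x ^ k * y ^ (m - k))
      = m * x * (x + y) ^ (m - 1) := by
  cases m with
  | zero => simp
  | succ M =>
    rw [sum_range_succ', add_pow, mul_sum, Nat.cast_zero, zero_mul, add_zero, Nat.add_sub_cancel]
    refine sum_congr rfl fun j _ => ?_
    have hchoose : ((j + 1 : ℕ) : R) * (M + 1).choose (j + 1) = (M + 1 : ℕ) * M.choose j := by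
      norm_cast
      exact congrArg _ ((mul_comm _ _).trans (Nat.add_one_mul_choose_eq M j).symm)
    rw [Nat.add_sub_add_right, pow_succ, ← mul_assoc, ← mul_assoc, hchoose]
    push_cast
    ring

lemma sum_mul_sampleProbR (m w b : ℕ) :
    ∑ k ∈ Finset.range (m + 1), (k : ℝ) * sampleProbR m k w b = m * w / (w + b) := by
  rcases Nat.eq_zero_or_pos m with rfl | hm
  · simp
  simp only [sampleProbR, mul_div_assoc', ← Finset.sum_div, sum_mul_choose_mul_pow_mul_pow]
  rcases eq_or_ne ((w : ℝ) + b) 0 with hT | hT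
  · simp [hT, hm.ne']
  obtain ⟨M, rfl⟩ : ∃ M, m = M + 1 := ⟨m - 1, by omega⟩
  rw [Nat.add_sub_cancel, pow_succ]
  field_simp

section UrnG

variable {T0 : ℕ} {σ : ℤ} {Λ : ℝ}

lemma urnG_zero (hρ : 0 < (T0 : ℝ) / σ) (hΛ : 0 ≤ Λ) : urnG T0 σ Λ 0 = 1 := by
  have h1 := (Real.Gamma_pos_of_pos hρ).ne'
  have h2 := (Real.Gamma_pos_of_pos (by linarith : 0 < (T0 : ℝ) / σ + Λ)).ne'
  simp only [urnG, urnQ, Nat.cast_zero, zero_add]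
  field_simp

lemma urnG_succ (hρ : 0 < (T0 : ℝ) / σ) (hΛ : 0 ≤ Λ) (n : ℕ) :
    urnG T0 σ Λ (n + 1) = urnG T0 σ Λ n * ((n + T0 / σ) / (n + T0 / σ + Λ)) := by
  have hx : (0 : ℝ) < n + T0 / σ := by positivity
  have hy : (0 : ℝ) < n + T0 / σ + Λ := by positivity
  have h1 := (Real.Gamma_pos_of_pos hx).ne'
  have h2 := (Real.Gamma_pos_of_pos hy).ne'
  simp only [urnG, Nat.cast_add_one, add_right_comm _ (1 : ℝ),
    Real.Gamma_add_one hx.ne', Real.Gamma_add_one hy.ne']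
  field_simp

lemma urnG_pos (hρ : 0 < (T0 : ℝ) / σ) (hΛ : 0 ≤ Λ) (n : ℕ) : 0 < urnG T0 σ Λ n := by
  induction n with
  | zero => rw [urnG_zero hρ hΛ]; exact one_pos
  | succ n ih => rw [urnG_succ hρ hΛ]; positivity

-- Weighted AM-GM, `(x + 1)^Λ x^(1-Λ) ≤ x + Λ`, bounds each factor `x / (x + Λ)` of the
-- product formula for `g_n` by `(x / (x + 1))^Λ`.
lemma urnG_mul_rpow_le (hρ : 0 < (T0 : ℝ) / σ) (hΛ0 : 0 ≤ Λ) (hΛ1 : Λ ≤ 1) (n : ℕ) :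
    urnG T0 σ Λ n * ((n : ℝ) + T0 / σ) ^ Λ ≤ ((T0 : ℝ) / σ) ^ Λ := by
  induction n with
  | zero => simp [urnG_zero hρ hΛ0]
  | succ n ih =>
    set x : ℝ := n + T0 / σ
    have hx : 0 < x := by positivity
    have hamgm : (x + 1) ^ Λ * x ^ (1 - Λ) ≤ x + Λ := by
      have := Real.geom_mean_le_arith_mean2_weighted (p₁ := x + 1) (p₂ := x) hΛ0
        (by linarith) (by linarith) hx.le (add_sub_cancel Λ 1)
      linarith
    have hstep : x / (x + Λ) * (x + 1) ^ Λ ≤ x ^ Λ := by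
      rw [div_mul_eq_mul_div, div_le_iff₀ (by positivity)]
      calc x * (x + 1) ^ Λ = (x + 1) ^ Λ * x ^ (1 - Λ) * x ^ Λ := by
            rw [mul_assoc, ← Real.rpow_add hx, sub_add_cancel, Real.rpow_one, mul_comm]
        _ ≤ (x + Λ) * x ^ Λ := by gcongr
        _ = x ^ Λ * (x + Λ) := mul_comm _ _
    calc urnG T0 σ Λ (n + 1) * (((n + 1 : ℕ) : ℝ) + T0 / σ) ^ Λ
        = urnG T0 σ Λ n * (x / (x + Λ) * (x + 1) ^ Λ) := by
          rw [urnG_succ hρ hΛ0, mul_assoc, Nat.cast_add_one, add_right_comm (n : ℝ) 1]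
      _ ≤ urnG T0 σ Λ n * x ^ Λ := by gcongr; exact (urnG_pos hρ hΛ0 n).le
      _ ≤ _ := ih

lemma summable_urnG_sq (hρ : 0 < (T0 : ℝ) / σ) (hΛ0 : 1 / 2 < Λ) (hΛ1 : Λ ≤ 1) :
    Summable fun n => urnG T0 σ Λ n ^ 2 := by
  have hΛ : 0 ≤ Λ := by linarith
  have hp : Summable fun n : ℕ => 1 / |(n : ℝ) + T0 / σ| ^ (2 * Λ) :=
    (Real.summable_one_div_nat_add_rpow _ _).2 (by linarith)
  refine Summable.of_nonneg_of_le (fun n => sq_nonneg _) (fun n => ?_)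
    (hp.mul_left ((((T0 : ℝ) / σ) ^ Λ) ^ 2))
  have hx : (0 : ℝ) < n + T0 / σ := by positivity
  have hxΛ : 0 < ((n : ℝ) + T0 / σ) ^ Λ := Real.rpow_pos_of_pos hx Λ
  have hg : urnG T0 σ Λ n ≤ ((T0 : ℝ) / σ) ^ Λ / ((n : ℝ) + T0 / σ) ^ Λ :=
    (le_div_iff₀ hxΛ).2 (urnG_mul_rpow_le hρ hΛ hΛ1 n)
  calc urnG T0 σ Λ n ^ 2 ≤ (((T0 : ℝ) / σ) ^ Λ / ((n : ℝ) + T0 / σ) ^ Λ) ^ 2 := by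
        gcongr; exact (urnG_pos hρ hΛ n).le
    _ = (((T0 : ℝ) / σ) ^ Λ) ^ 2 * (1 / |(n : ℝ) + T0 / σ| ^ (2 * Λ)) := by
        rw [abs_of_pos hx, mul_comm 2 Λ, Real.rpow_mul hx.le, Real.rpow_two]
        ring

end UrnG

open Real in
lemma exp_mul_le_cosh_add_sinh_div_mul (s : ℝ) {c x : ℝ} (hx : |x| ≤ c) :
    exp (s * x) ≤ cosh (s * c) + sinh (s * c) / c * x := by
  obtain ⟨hcx, hxc⟩ := abs_le.1 hx
  rcases (abs_nonneg x).trans hx |>.eq_or_lt with hc | hc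
  · obtain rfl : x = 0 := by linarith
    simp [← hc]
  -- `x` is the convex combination of `c` and `-c` with weights `(c + x) / 2c` and `(c - x) / 2c`
  have hcvx := convexOn_exp.2 (mem_univ (s * c)) (mem_univ (-(s * c)))
    (div_nonneg (by linarith) (by linarith : 0 ≤ 2 * c) : 0 ≤ (c + x) / (2 * c))
    (div_nonneg (by linarith) (by linarith : 0 ≤ 2 * c) : 0 ≤ (c - x) / (2 * c))
    (by field_simp; ring)
  simp only [smul_eq_mul] at hcvx
  calc exp (s * x) = exp ((c + x) / (2 * c) * (s * c) + (c - x) / (2 * c) * -(s * c)) := by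
        congr 1; field_simp; ring
    _ ≤ _ := hcvx
    _ = cosh (s * c) + sinh (s * c) / c * x := by
        rw [cosh_eq, sinh_eq]; field_simp; ring

namespace ProbabilityTheory.HasSubgaussianMGF

variable {Ω : Type*} [MeasurableSpace Ω] {μ : Measure Ω} {X : Ω → ℝ} {c : NNReal}

lemma mono (h : HasSubgaussianMGF X c μ) {c' : NNReal} (hc : c ≤ c') :
    HasSubgaussianMGF X c' μ where
  integrable_exp_mul := h.integrable_exp_mul
  mgf_le t := (h.mgf_le t).trans (Real.exp_le_exp.2 (by gcongr))

lemma measureReal_abs_ge_le (h : HasSubgaussianMGF X c μ) {ε : ℝ} (hε : 0 ≤ ε) :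
    μ.real {ω | ε ≤ |X ω|} ≤ 2 * Real.exp (-ε ^ 2 / (2 * c)) := by
  have : IsFiniteMeasure μ := by
    simpa [integrable_const_iff] using h.integrable_exp_mul 0
  have hsub : {ω | ε ≤ |X ω|} ⊆ {ω | ε ≤ X ω} ∪ {ω | ε ≤ (-X) ω} := fun ω hω => by
    simpa only [mem_union, mem_ofPred_eq, Pi.neg_apply] using le_abs'.1 hω |>.symm.imp_right
      (fun h => by linarith)
  calc μ.real {ω | ε ≤ |X ω|} ≤ μ.real {ω | ε ≤ X ω} + μ.real {ω | ε ≤ (-X) ω} :=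
        (measureReal_mono hsub).trans (measureReal_union_le _ _)
    _ ≤ _ := by linarith [h.measure_ge_le hε, h.neg.measure_ge_le hε]

lemma of_tendsto_ae {Y : ℕ → Ω → ℝ} (h : ∀ n, HasSubgaussianMGF (Y n) c μ)
    (hlim : ∀ᵐ ω ∂μ, Tendsto (fun n => Y n ω) atTop (𝓝 (X ω))) :
    HasSubgaussianMGF X c μ := by
  have hexp (t : ℝ) : ∀ᵐ ω ∂μ,
      Tendsto (fun n => Real.exp (t * Y n ω)) atTop (𝓝 (Real.exp (t * X ω))) :=
    hlim.mono fun ω hω => (Real.continuous_exp.tendsto _).comp (hω.const_mul t)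
  have hmeas (t : ℝ) : AEStronglyMeasurable (fun ω => Real.exp (t * X ω)) μ :=
    aestronglyMeasurable_of_tendsto_ae atTop
      (fun n => ((h n).integrable_exp_mul t).aestronglyMeasurable) (hexp t)
  have hlintegral (t : ℝ) : ∫⁻ ω, ENNReal.ofReal (Real.exp (t * X ω)) ∂μ
      ≤ ENNReal.ofReal (Real.exp (c * t ^ 2 / 2)) :=
    calc ∫⁻ ω, ENNReal.ofReal (Real.exp (t * X ω)) ∂μ
        = ∫⁻ ω, liminf (fun n => ENNReal.ofReal (Real.exp (t * Y n ω))) atTop ∂μ :=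
          lintegral_congr_ae <| (hexp t).mono fun ω hω =>
            ((ENNReal.continuous_ofReal.tendsto _).comp hω).liminf_eq.symm
      _ ≤ liminf (fun n => ∫⁻ ω, ENNReal.ofReal (Real.exp (t * Y n ω)) ∂μ) atTop :=
          lintegral_liminf_le' fun n =>
            ((h n).integrable_exp_mul t).aemeasurable.ennreal_ofReal
      _ ≤ ENNReal.ofReal (Real.exp (c * t ^ 2 / 2)) := by
          refine liminf_le_of_frequently_le' (Frequently.of_forall fun n => ?_)
          rw [← ofReal_integral_eq_lintegral_ofReal ((h n).integrable_exp_mul t)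
            (ae_of_all _ fun ω => (Real.exp_pos _).le)]
          exact ENNReal.ofReal_le_ofReal ((h n).mgf_le t)
  refine ⟨fun t => ⟨hmeas t, ?_⟩, fun t => ?_⟩
  · rw [hasFiniteIntegral_iff_ofReal (ae_of_all _ fun ω => (Real.exp_pos _).le)]
    exact (hlintegral t).trans_lt ENNReal.ofReal_lt_top
  · rw [mgf, integral_eq_lintegral_of_nonneg_ae (ae_of_all _ fun ω => (Real.exp_pos _).le)
      (hmeas t)]
    exact ENNReal.toReal_le_of_le_ofReal (Real.exp_pos _).le (hlintegral t)

end ProbabilityTheory.HasSubgaussianMGF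

lemma MeasureTheory.Martingale.integral_mul_sub_eq_zero {Ω : Type*} [m0 : MeasurableSpace Ω]
    {μ : Measure Ω} [IsFiniteMeasure μ] {F : Filtration ℕ m0} {M : ℕ → Ω → ℝ}
    (hM : Martingale M F μ) {n : ℕ} {f : Ω → ℝ} (hf : StronglyMeasurable[F n] f)
    (hfD : Integrable (fun ω => f ω * (M (n + 1) ω - M n ω)) μ) :
    ∫ ω, f ω * (M (n + 1) ω - M n ω) ∂μ = 0 := by
  have hD : μ[M (n + 1) - M n | F n] =ᵐ[μ] 0 := by
    filter_upwards [condExp_sub (hM.integrable (n + 1)) (hM.integrable n) (F n),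
      hM.condExp_ae_eq n.le_succ] with ω h1 h2
    rw [h1, Pi.sub_apply, h2,
      condExp_of_stronglyMeasurable (F.le n) (hM.stronglyMeasurable n) (hM.integrable n)]
    exact sub_self _
  calc ∫ ω, f ω * (M (n + 1) ω - M n ω) ∂μ
      = ∫ ω, (μ[f * (M (n + 1) - M n) | F n]) ω ∂μ := (integral_condExp (F.le n)).symm
    _ = ∫ ω, f ω * (μ[M (n + 1) - M n | F n]) ω ∂μ := integral_congr_ae
        (condExp_mul_of_stronglyMeasurable_left hf hfD
          ((hM.integrable (n + 1)).sub (hM.integrable n)))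
    _ = 0 := by
        rw [integral_congr_ae (hD.mono fun ω hω => by rw [hω, Pi.zero_apply, mul_zero])]
        exact integral_zero _ _

open Finset in
theorem MeasureTheory.Martingale.hasSubgaussianMGF {Ω : Type*} [m0 : MeasurableSpace Ω]
    {μ : Measure Ω} [IsZeroOrProbabilityMeasure μ] {F : Filtration ℕ m0} {M : ℕ → Ω → ℝ}
    (hM : Martingale M F μ) (h0 : ∀ ω, M 0 ω = 0) {c : ℕ → NNReal}
    (hc : ∀ n ω, |M (n + 1) ω - M n ω| ≤ c n) (N : ℕ) :
    HasSubgaussianMGF (M N) (∑ n ∈ range N, c n ^ 2) μ := by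
  induction N with
  | zero => simp [funext h0, HasSubgaussianMGF.fun_zero]
  | succ N ih =>
    set D : Ω → ℝ := fun ω => M (N + 1) ω - M N ω
    have hDmeas : AEStronglyMeasurable D μ :=
      ((hM.integrable (N + 1)).sub (hM.integrable N)).aestronglyMeasurable
    have hsplit (t : ℝ) (ω : Ω) :
        Real.exp (t * M (N + 1) ω) = Real.exp (t * D ω) * Real.exp (t * M N ω) := by
      rw [← Real.exp_add, mul_sub, sub_add_cancel]
    have hint (t : ℝ) : Integrable (fun ω => Real.exp (t * M (N + 1) ω)) μ := by
      simp only [hsplit]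
      refine (ih.integrable_exp_mul t).bdd_mul (c := Real.exp (|t| * c N))
        (Real.continuous_exp.comp_aestronglyMeasurable (hDmeas.const_mul t))
        (ae_of_all _ fun ω => ?_)
      rw [Real.norm_eq_abs, Real.abs_exp]
      exact Real.exp_le_exp.2 ((le_abs_self _).trans
        (by rw [abs_mul]; exact mul_le_mul_of_nonneg_left (hc N ω) (abs_nonneg t)))
    refine ⟨hint, fun t => ?_⟩
    have hfD : Integrable (fun ω => Real.exp (t * M N ω) * D ω) μ :=
      (ih.integrable_exp_mul t).mul_bdd hDmeas (ae_of_all _ fun ω => hc N ω)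
    have horth : ∫ ω, Real.exp (t * M N ω) * D ω ∂μ = 0 :=
      hM.integral_mul_sub_eq_zero
        ((hM.stronglyMeasurable N).measurable.const_mul t).exp.stronglyMeasurable hfD
    calc mgf (M (N + 1)) μ t
        ≤ ∫ ω, (Real.cosh (t * c N) * Real.exp (t * M N ω)
            + Real.sinh (t * c N) / c N * (Real.exp (t * M N ω) * D ω)) ∂μ := by
          refine integral_mono (hint t)
            (((ih.integrable_exp_mul t).const_mul _).add (hfD.const_mul _)) fun ω => ?_
          have := mul_le_mul_of_nonneg_right (exp_mul_le_cosh_add_sinh_div_mul t (hc N ω))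
            (Real.exp_pos (t * M N ω)).le
          simp only [hsplit]
          linarith
      _ = Real.cosh (t * c N) * mgf (M N) μ t := by
          rw [integral_add ((ih.integrable_exp_mul t).const_mul _) (hfD.const_mul _),
            integral_const_mul, integral_const_mul, horth, mul_zero, add_zero, mgf]
      _ ≤ Real.exp ((t * c N) ^ 2 / 2) * Real.exp (↑(∑ n ∈ range N, c n ^ 2) * t ^ 2 / 2) :=
          mul_le_mul (Real.cosh_le_exp_half_sq _) (ih.mgf_le t) mgf_nonneg
            (Real.exp_pos _).le
      _ = Real.exp (↑(∑ n ∈ range (N + 1), c n ^ 2) * t ^ 2 / 2) := by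
          rw [← Real.exp_add, sum_range_succ]
          push_cast
          ring_nf

namespace UrnScheme

variable {Ω : Type*} [m0 : MeasurableSpace Ω] {μ : Measure Ω} {mdlM : Bool} {m : ℕ}
  {a b : ℕ → ℤ} {σ : ℤ} {W0 B0 : ℕ} {W B R : ℕ → Ω → ℕ} {F : Filtration ℕ m0}

lemma W_succ (h : UrnScheme μ mdlM m a b σ W0 B0 W B R F) (n : ℕ) (ω : Ω) :
    (W (n + 1) ω : ℝ) = W n ω + a m + ((a (m - 1) : ℝ) - a m) * R (n + 1) ω := by
  have hk := h.affine (m - R (n + 1) ω) (Nat.sub_le _ _)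
  rw [Nat.cast_sub (h.sampleLe n ω), sub_sub_cancel] at hk
  have hW : (W (n + 1) ω : ℤ) = W n ω + a m + (a (m - 1) - a m) * R (n + 1) ω := by
    rw [h.dynW, hk]; ring
  exact_mod_cast hW

lemma W_add_B (h : UrnScheme μ mdlM m a b σ W0 B0 W B R F) (n : ℕ) (ω : Ω) :
    (W n ω : ℝ) + B n ω = ((W0 + B0 : ℕ) : ℝ) + σ * n := by
  have key : (W n ω : ℤ) + B n ω = ((W0 + B0 : ℕ) : ℤ) + σ * n := by
    induction n with
    | zero => simp [h.initW, h.initB]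
    | succ n ih =>
      rw [h.dynW, h.dynB]
      push_cast at ih ⊢
      linear_combination ih + h.balanced _ (Nat.sub_le m (R (n + 1) ω))
  exact_mod_cast key

lemma total_pos [Nonempty Ω] (h : UrnScheme μ mdlM m a b σ W0 B0 W B R F) (n : ℕ) :
    0 < ((W0 + B0 : ℕ) : ℝ) + σ * n := by
  obtain ⟨ω⟩ := ‹Nonempty Ω›
  have hfit := h.sampleFit n ω
  have hpos : 0 < W n ω + B n ω := by
    refine lt_of_lt_of_le ?_ hfit
    cases mdlM
    · exact one_pos
    · exact h.hm
  rw [← h.W_add_B n ω]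
  exact_mod_cast hpos

lemma initial_ratio_pos [Nonempty Ω] (h : UrnScheme μ mdlM m a b σ W0 B0 W B R F) :
    0 < ((W0 + B0 : ℕ) : ℝ) / σ := by
  have h0 := h.total_pos 0
  have hσ : (0 : ℝ) < σ := by exact_mod_cast h.hσ
  simp only [Nat.cast_zero, mul_zero, add_zero] at h0
  positivity

lemma measurable_W (h : UrnScheme μ mdlM m a b σ W0 B0 W B R F) (n : ℕ) :
    Measurable[F n] fun ω => (W n ω : ℝ) :=
  measurable_from_top.comp (h.measW n)

lemma integrable_W [IsFiniteMeasure μ] (h : UrnScheme μ mdlM m a b σ W0 B0 W B R F) (n : ℕ) :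
    Integrable (fun ω => (W n ω : ℝ)) μ := by
  refine .of_bound ((h.measurable_W n).mono (F.le n) le_rfl).aestronglyMeasurable
    (((W0 + B0 : ℕ) : ℝ) + σ * n) (ae_of_all _ fun ω => ?_)
  rw [Real.norm_natCast, ← h.W_add_B n ω]
  exact le_add_of_nonneg_right (Nat.cast_nonneg _)

lemma integrable_R [IsFiniteMeasure μ] (h : UrnScheme μ mdlM m a b σ W0 B0 W B R F) (n : ℕ) :
    Integrable (fun ω => (R (n + 1) ω : ℝ)) μ :=
  .of_bound (measurable_from_top.comp ((h.measR n).mono (F.le (n + 1)) le_rfl)).aestronglyMeasurable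
    m (ae_of_all _ fun ω => by rw [Real.norm_natCast]; exact_mod_cast h.sampleLe n ω)

lemma condExp_R [IsFiniteMeasure μ] (h : UrnScheme μ mdlM m a b σ W0 B0 W B R F) (n : ℕ) :
    μ[fun ω => (R (n + 1) ω : ℝ) | F n]
      =ᵐ[μ] fun ω => m * W n ω / (((W0 + B0 : ℕ) : ℝ) + σ * n) := by
  have hset (k : ℕ) : MeasurableSet {ω | R (n + 1) ω = k} :=
    F.le (n + 1) _ (h.measR n (measurableSet_singleton k))
  have hdecomp : (fun ω => (R (n + 1) ω : ℝ))
      = ∑ k ∈ Finset.range (m + 1), (k : ℝ) • {ω | R (n + 1) ω = k}.indicator (fun _ => 1) := by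
    ext ω
    simp [Set.indicator_apply, Nat.lt_succ_iff.2 (h.sampleLe n ω)]
  rw [hdecomp]
  refine (condExp_finsetSum
    (fun k _ => ((integrable_const 1).indicator (hset k)).smul _) _).trans ?_
  refine (eventuallyEq_sum fun k hk => (condExp_smul _ _ _).trans
    ((h.condLaw n k (Nat.lt_succ_iff.1 (Finset.mem_range.1 hk))).const_smul _)).trans
    (ae_of_all _ fun ω => ?_)
  simp only [Finset.sum_apply, Pi.smul_apply, smul_eq_mul, ← h.W_add_B n ω]
  have hfit := h.sampleFit n ω
  cases mdlM
  · exact sum_mul_sampleProbR m (W n ω) (B n ω)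
  · exact sum_mul_sampleProbM m (W n ω) (B n ω) hfit

lemma integral_W_succ [IsProbabilityMeasure μ] (h : UrnScheme μ mdlM m a b σ W0 B0 W B R F)
    (n : ℕ) : ∫ ω, (W (n + 1) ω : ℝ) ∂μ = (1 + m * ((a (m - 1) : ℝ) - a m)
      / (((W0 + B0 : ℕ) : ℝ) + σ * n)) * ∫ ω, (W n ω : ℝ) ∂μ + a m := by
  have hR : ∫ ω, (R (n + 1) ω : ℝ) ∂μ
      = m / (((W0 + B0 : ℕ) : ℝ) + σ * n) * ∫ ω, (W n ω : ℝ) ∂μ := by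
    rw [← integral_condExp (F.le n), integral_congr_ae (h.condExp_R n), ← integral_const_mul]
    simp only [mul_div_right_comm]
  simp only [h.W_succ n]
  rw [integral_add ?_ ((h.integrable_R n).const_mul _),
    integral_add (h.integrable_W n) (integrable_const _), integral_const_mul, hR]
  · simp only [integral_const, probReal_univ, one_smul]
    ring
  · exact (h.integrable_W n).add (integrable_const _)

lemma calW_zero [IsProbabilityMeasure μ] (h : UrnScheme μ mdlM m a b σ W0 B0 W B R F)
    (Λ : ℝ) (T0 : ℕ) (ω : Ω) : calW μ σ Λ T0 W 0 ω = 0 := by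
  simp [calW, h.initW]

lemma calW_succ [IsProbabilityMeasure μ] (h : UrnScheme μ mdlM m a b σ W0 B0 W B R F)
    (hΛ : 0 ≤ urnIndex m a σ) (n : ℕ) (ω : Ω) :
    calW μ σ (urnIndex m a σ) (W0 + B0) W (n + 1) ω
      = calW μ σ (urnIndex m a σ) (W0 + B0) W n ω
        + urnG (W0 + B0) σ (urnIndex m a σ) (n + 1) * ((a (m - 1) : ℝ) - a m)
          * (R (n + 1) ω - m * W n ω / (((W0 + B0 : ℕ) : ℝ) + σ * n)) := by
  have := nonempty_of_isProbabilityMeasure μ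
  have hρ := h.initial_ratio_pos
  have hT := h.total_pos n
  have hσ : (0 : ℝ) < σ := by exact_mod_cast h.hσ
  set Λ := urnIndex m a σ with hΛdef
  have hΛσ : m * ((a (m - 1) : ℝ) - a m) = Λ * σ := by
    rw [hΛdef, urnIndex]; field_simp
  have hg : urnG (W0 + B0) σ Λ (n + 1)
      * (1 + m * ((a (m - 1) : ℝ) - a m) / (((W0 + B0 : ℕ) : ℝ) + σ * n))
        = urnG (W0 + B0) σ Λ n := by
    have hρn : (n : ℝ) + ((W0 + B0 : ℕ) : ℝ) / σ = (((W0 + B0 : ℕ) : ℝ) + σ * n) / σ := by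
      field_simp; ring
    have : 0 < ((W0 + B0 : ℕ) : ℝ) + σ * n + Λ * σ := by positivity
    rw [urnG_succ hρ hΛ, hΛσ, hρn, mul_assoc]
    convert mul_one _ using 2
    field_simp
  simp only [calW]
  rw [h.W_succ, h.integral_W_succ]
  linear_combination ((W n ω : ℝ) - ∫ ω, (W n ω : ℝ) ∂μ) * hg

lemma martingale_calW [IsProbabilityMeasure μ] (h : UrnScheme μ mdlM m a b σ W0 B0 W B R F)
    (hΛ : 0 ≤ urnIndex m a σ) : Martingale (calW μ σ (urnIndex m a σ) (W0 + B0) W) F μ := by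
  have hint n : Integrable (calW μ σ (urnIndex m a σ) (W0 + B0) W n) μ :=
    ((h.integrable_W n).sub (integrable_const _)).const_mul _
  have hsm n : StronglyMeasurable[F n] (calW μ σ (urnIndex m a σ) (W0 + B0) W n) :=
    (((h.measurable_W n).sub_const _).const_mul _).stronglyMeasurable
  refine martingale_nat hsm hint fun n => ?_
  set Rn : Ω → ℝ := fun ω => R (n + 1) ω
  set X : Ω → ℝ := fun ω => m * W n ω / (((W0 + B0 : ℕ) : ℝ) + σ * n)
  have hXint : Integrable X μ := ((h.integrable_W n).const_mul _).div_const _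
  have hXsm : StronglyMeasurable[F n] X :=
    (((h.measurable_W n).const_mul _).div_const _).stronglyMeasurable
  have hincr : μ[Rn - X | F n] =ᵐ[μ] 0 := by
    filter_upwards [condExp_sub (h.integrable_R n) hXint (F n), h.condExp_R n] with ω h1 h2
    rw [h1, Pi.sub_apply, h2, condExp_of_stronglyMeasurable (F.le n) hXsm hXint]
    exact sub_self _
  set c := urnG (W0 + B0) σ (urnIndex m a σ) (n + 1) * ((a (m - 1) : ℝ) - a m)
  have hsucc : calW μ σ (urnIndex m a σ) (W0 + B0) W (n + 1)
      = calW μ σ (urnIndex m a σ) (W0 + B0) W n + c • (Rn - X) :=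
    funext (h.calW_succ hΛ n)
  rw [hsucc]
  filter_upwards [condExp_add (hint n) (((h.integrable_R n).sub hXint).smul c) (F n),
    condExp_smul (μ := μ) c (Rn - X) (F n), hincr] with ω h1 h2 h3
  rw [h1, Pi.add_apply, h2, Pi.smul_apply, h3,
    condExp_of_stronglyMeasurable (F.le n) (hsm n) (hint n)]
  simp

lemma abs_calW_succ_sub_le [IsProbabilityMeasure μ] (h : UrnScheme μ mdlM m a b σ W0 B0 W B R F)
    (hΛ : 0 ≤ urnIndex m a σ) (n : ℕ) (ω : Ω) :
    |calW μ σ (urnIndex m a σ) (W0 + B0) W (n + 1) ω - calW μ σ (urnIndex m a σ) (W0 + B0) W n ω|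
      ≤ m * |(a (m - 1) : ℝ) - a m| * urnG (W0 + B0) σ (urnIndex m a σ) (n + 1) := by
  have := nonempty_of_isProbabilityMeasure μ
  have hg := urnG_pos h.initial_ratio_pos hΛ (n + 1)
  have hT := h.total_pos n
  have hR : (R (n + 1) ω : ℝ) ≤ m := by exact_mod_cast h.sampleLe n ω
  have hW : (W n ω : ℝ) ≤ ((W0 + B0 : ℕ) : ℝ) + σ * n :=
    h.W_add_B n ω ▸ le_add_of_nonneg_right (Nat.cast_nonneg _)
  have hmean : m * W n ω / (((W0 + B0 : ℕ) : ℝ) + σ * n) ≤ m := by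
    rw [div_le_iff₀ hT]; exact mul_le_mul_of_nonneg_left hW (Nat.cast_nonneg _)
  have hmean0 : 0 ≤ m * (W n ω : ℝ) / (((W0 + B0 : ℕ) : ℝ) + σ * n) := by positivity
  have hdev : |(R (n + 1) ω : ℝ) - m * W n ω / (((W0 + B0 : ℕ) : ℝ) + σ * n)| ≤ m :=
    abs_sub_le_iff.2 ⟨by linarith, by linarith [(Nat.cast_nonneg (R (n + 1) ω) : (0 : ℝ) ≤ _)]⟩
  rw [h.calW_succ hΛ, add_sub_cancel_left, abs_mul, abs_mul, abs_of_pos hg]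
  calc _ ≤ urnG (W0 + B0) σ (urnIndex m a σ) (n + 1) * |(a (m - 1) : ℝ) - a m| * m := by gcongr
    _ = _ := by ring

open Finset in
lemma exists_hasSubgaussianMGF_calW [IsProbabilityMeasure μ]
    (h : UrnScheme μ mdlM m a b σ W0 B0 W B R F)
    (hΛlo : 1 / 2 < urnIndex m a σ) (hΛhi : urnIndex m a σ ≤ 1) :
    ∃ V : NNReal, 0 < V ∧
      ∀ N, HasSubgaussianMGF (calW μ σ (urnIndex m a σ) (W0 + B0) W N) V μ := by
  have := nonempty_of_isProbabilityMeasure μ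
  have hΛ : 0 ≤ urnIndex m a σ := by linarith
  set c : ℕ → ℝ := fun n =>
    m * |(a (m - 1) : ℝ) - a m| * urnG (W0 + B0) σ (urnIndex m a σ) (n + 1)
  have hc n : 0 ≤ c n := mul_nonneg (by positivity) (urnG_pos h.initial_ratio_pos hΛ _).le
  have hsum : Summable fun n => (c n).toNNReal ^ 2 := by
    refine (Summable.toNNReal ?_).congr fun n => Real.toNNReal_pow (hc n) 2
    simpa only [c, mul_pow] using
      ((summable_nat_add_iff 1).2 (summable_urnG_sq h.initial_ratio_pos hΛlo hΛhi)).mul_left _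
  refine ⟨∑' n, (c n).toNNReal ^ 2 + 1, by positivity, fun N => ?_⟩
  refine ((h.martingale_calW hΛ).hasSubgaussianMGF (h.calW_zero _ _)
    (fun n ω => (h.abs_calW_succ_sub_le hΛ n ω).trans (Real.le_coe_toNNReal _)) N).mono ?_
  exact (hsum.sum_le_tsum _ fun _ _ => zero_le).trans le_self_add

end UrnScheme

theorem largeIndex_subgaussian_general {Ω : Type*} [m0 : MeasurableSpace Ω] (μ : Measure Ω)
    [IsProbabilityMeasure μ] (mdlM : Bool) (m : ℕ) (a b : ℕ → ℤ) (σ : ℤ) (W0 B0 : ℕ)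
    (W B : ℕ → Ω → ℕ) (R : ℕ → Ω → ℕ) (F : Filtration ℕ m0)
    (hurn : UrnScheme μ mdlM m a b σ W0 B0 W B R F)
    (hΛlo : 1 / 2 < urnIndex m a σ) (hΛhi : urnIndex m a σ < 1)
    (Winf : Ω → ℝ)
    (hWinf : ∀ᵐ ω ∂μ, Tendsto (fun n : ℕ => calW μ σ (urnIndex m a σ) (W0 + B0) W n ω)
      atTop (𝓝 (Winf ω))) :
    ∃ c C : ℝ, 0 < c ∧ 0 < C ∧ ∀ t : ℝ, 0 < t →
      (μ {ω | t ≤ |Winf ω|}).toReal ≤ C * Real.exp (-c * t ^ 2) := by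
  obtain ⟨V, hV, hcalW⟩ := hurn.exists_hasSubgaussianMGF_calW hΛlo hΛhi.le
  have hWinf_subG := HasSubgaussianMGF.of_tendsto_ae hcalW hWinf
  refine ⟨1 / (2 * V), 2, by positivity, two_pos, fun t ht => ?_⟩
  refine (hWinf_subG.measureReal_abs_ge_le ht.le).trans_eq ?_
  ring_nf

/-- The limit `𝒲_∞` of the martingale `𝒲_n = g_n (W_n - E[W_n])` in a
large-index urn is Subgaussian. -/
theorem largeIndex_subgaussian {Ω : Type*} [m0 : MeasurableSpace Ω] (μ : Measure Ω)
    [IsProbabilityMeasure μ] (mdlM : Bool) (m : ℕ) (a b : ℕ → ℤ) (σ : ℤ) (W0 B0 : ℕ)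
    (W B : ℕ → Ω → ℕ) (R : ℕ → Ω → ℕ) (F : Filtration ℕ m0)
    (hurn : UrnScheme μ mdlM m a b σ W0 B0 W B R F)
    (ham : 1 ≤ a m) (hb0 : 1 ≤ b 0)
    (hΛlo : 1 / 2 < urnIndex m a σ) (hΛhi : urnIndex m a σ < 1)
    (Winf : Ω → ℝ)
    (hWinf : ∀ᵐ ω ∂μ, Tendsto (fun n : ℕ => calW μ σ (urnIndex m a σ) (W0 + B0) W n ω)
      atTop (𝓝 (Winf ω))) :
    ∃ c C : ℝ, 0 < c ∧ 0 < C ∧ ∀ t : ℝ, 0 < t →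
      (μ {ω | t ≤ |Winf ω|}).toReal ≤ C * Real.exp (-c * t ^ 2) :=
  largeIndex_subgaussian_general (m0 := m0) μ mdlM m a b σ W0 B0 W B R F hurn hΛlo hΛhi Winf hWinf
end
end

section
/- Let W_n be the number of white balls at time n in a balanced affine tenable two-color urn scheme with multiple drawings (model M or model R) which is either a large-index urn (a_m ≥ 1, b_0 ≥ 1, 1/2 < Λ < 1) or a triangular urn with Λ < 1 (a_m = 0, 0 < Λ < 1). Then for all n ≥ 1, E[W_n] = a_m·(n + T_0/σ)/(1−Λ) + (W_0 − a_m T_0/(σ(1−Λ)))·(Γ(n+T_0/σ+Λ)Γ(T_0/σ))/(Γ(n+T_0/σ)Γ(T_0/σ+Λ)), and consequently E[W_n] = ζn + ϑ·n^Λ + O(1) as n → ∞, where ϑ = (W_0 − a_m T_0/(σ(1−Λ)))·Γ(T_0/σ)/Γ(T_0/σ+Λ). -/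
open MeasureTheory ProbabilityTheory Filter Set Topology

noncomputable section

/-! ### Auxiliary combinatorial lemmas -/

private lemma urn_vand (x y k : ℕ) :
    (x + y).choose k = ∑ j ∈ Finset.range (k+1), x.choose j * y.choose (k-j) := by
  rw [Nat.add_choose_eq, Finset.Nat.sum_antidiagonal_eq_sum_range_succ_mk]

private lemma urn_key_choose (w j : ℕ) : (j+1) * w.choose (j+1) = w * (w-1).choose j := by
  cases w with
  | zero => simp
  | succ w' => rw [Nat.succ_sub_one, mul_comm, Nat.add_one_mul_choose_eq, mul_comm]

private lemma urn_hyp_num (m w b : ℕ) (hm : 1 ≤ m) :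
    ∑ k ∈ Finset.range (m+1), k * (w.choose k * b.choose (m-k))
      = w * (w - 1 + b).choose (m-1) := by
  rw [Finset.sum_range_succ']
  have hterm : ∀ i, (i+1) * (w.choose (i+1) * b.choose (m-(i+1)))
      = w * ((w-1).choose i * b.choose ((m-1)-i)) := by
    intro i
    have h2 : m - (i+1) = (m-1) - i := by omega
    rw [h2, ← mul_assoc, urn_key_choose, mul_assoc]
  simp only [hterm, zero_mul, add_zero, ← Finset.mul_sum]
  congr 1
  have hr : m = (m-1) + 1 := by omega
  rw [urn_vand, ← hr]

private lemma urn_bin_num (m w b : ℕ) (hm : 1 ≤ m) :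
    ∑ k ∈ Finset.range (m+1), k * (m.choose k * w^k * b^(m-k))
      = m * (w * (w+b)^(m-1)) := by
  rw [Finset.sum_range_succ']
  have hterm : ∀ i, (i+1) * (m.choose (i+1) * w^(i+1) * b^(m-(i+1)))
      = (m * w) * ((m-1).choose i * w^i * b^((m-1)-i)) := by
    intro i
    have h2 : m - (i+1) = (m-1) - i := by omega
    rw [h2, pow_succ]
    calc (i+1) * (m.choose (i+1) * (w^i * w) * b^((m-1)-i))
        = ((i+1) * m.choose (i+1)) * (w^i * w * b^((m-1)-i)) := by ring
      _ = (m * (m-1).choose i) * (w^i * w * b^((m-1)-i)) := by rw [urn_key_choose]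
      _ = (m * w) * ((m-1).choose i * w^i * b^((m-1)-i)) := by ring
  simp only [hterm, zero_mul, add_zero, ← Finset.mul_sum]
  have hb : ∑ i ∈ Finset.range m, (m-1).choose i * w^i * b^((m-1)-i) = (w+b)^(m-1) := by
    have hr : m = (m-1) + 1 := by omega
    rw [add_pow]
    rw [← hr]
    exact Finset.sum_congr rfl (fun i _ => by push_cast; ring)
  rw [hb, mul_assoc]

private lemma urn_bin_pow (m w b : ℕ) :
    ∑ k ∈ Finset.range (m+1), m.choose k * w^k * b^(m-k) = (w+b)^m := by
  rw [add_pow]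
  exact (Finset.sum_congr rfl (fun i _ => by push_cast; ring)).symm

private lemma sampleProbM_nonneg (m k w b : ℕ) : 0 ≤ sampleProbM m k w b := by
  unfold sampleProbM; positivity

private lemma sampleProbM_le_one (m k w b : ℕ) (hk : k ≤ m) : sampleProbM m k w b ≤ 1 := by
  unfold sampleProbM
  rcases Nat.eq_zero_or_pos ((w+b).choose m) with h | h
  · simp [h]
  · rw [div_le_one (by exact_mod_cast h)]
    have hle : w.choose k * b.choose (m-k) ≤ (w+b).choose m := by
      rw [urn_vand]
      exact Finset.single_le_sum (f := fun j => w.choose j * b.choose (m-j))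
        (fun i _ => Nat.zero_le _) (Finset.mem_range.mpr (by omega))
    exact_mod_cast hle

private lemma sampleProbR_nonneg (m k w b : ℕ) : 0 ≤ sampleProbR m k w b := by
  unfold sampleProbR; positivity

private lemma sampleProbR_le_one (m k w b : ℕ) (hk : k ≤ m) : sampleProbR m k w b ≤ 1 := by
  unfold sampleProbR
  have hd : ((w:ℝ) + b)^m = (((w+b)^m : ℕ) : ℝ) := by push_cast; ring
  rw [hd]
  rcases Nat.eq_zero_or_pos ((w+b)^m) with h | h
  · rw [h]; norm_num
  · rw [div_le_one (by exact_mod_cast h)]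
    have hle : m.choose k * w^k * b^(m-k) ≤ (w+b)^m := by
      rw [← urn_bin_pow]
      exact Finset.single_le_sum (f := fun j => m.choose j * w^j * b^(m-j))
        (fun i _ => Nat.zero_le _) (Finset.mem_range.mpr (by omega))
    exact_mod_cast hle

private lemma urn_meanM (m w b : ℕ) (hm : 1 ≤ m) (hwb : m ≤ w + b) :
    ∑ k ∈ Finset.range (m+1), (k:ℝ) * sampleProbM m k w b
      = (m:ℝ) * w / ((w:ℝ) + b) := by
  have hc : 0 < (w+b).choose m := Nat.choose_pos hwb
  have hterm : ∀ k : ℕ, (k:ℝ) * sampleProbM m k w b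
      = ((k * (w.choose k * b.choose (m-k)) : ℕ) : ℝ) / ((w+b).choose m : ℝ) := by
    intro k; unfold sampleProbM; push_cast; ring
  simp only [hterm]
  rw [← Finset.sum_div, ← Nat.cast_sum, urn_hyp_num m w b hm]
  have hkey : ((w+b : ℕ):ℝ) * (((w+b)-1).choose (m-1) : ℝ)
      = (m:ℝ) * ((w+b).choose m : ℝ) := by
    have h0 : m * (w+b).choose m = (w+b) * ((w+b)-1).choose (m-1) := by
      have hr : m = (m-1) + 1 := by omega
      calc m * (w+b).choose m = ((m-1)+1) * (w+b).choose ((m-1)+1) := by rw [← hr]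
        _ = (w+b) * ((w+b)-1).choose (m-1) := urn_key_choose _ _
    exact_mod_cast h0.symm
  rcases Nat.eq_zero_or_pos w with hw | hw
  · subst hw; simp
  · have h1 : w - 1 + b = (w+b) - 1 := by omega
    rw [h1]
    have hcb : (0:ℝ) < ((w+b).choose m : ℝ) := by exact_mod_cast hc
    have hwb' : (0:ℝ) < (w:ℝ) + b := by
      have h2 : 0 < w + b := by omega
      exact_mod_cast h2
    rw [div_eq_div_iff hcb.ne' hwb'.ne']
    push_cast
    push_cast at hkey
    linear_combination (w:ℝ) * hkey

private lemma urn_meanR (m w b : ℕ) (hm : 1 ≤ m) (hwb : 1 ≤ w + b) :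
    ∑ k ∈ Finset.range (m+1), (k:ℝ) * sampleProbR m k w b
      = (m:ℝ) * w / ((w:ℝ) + b) := by
  have hterm : ∀ k : ℕ, (k:ℝ) * sampleProbR m k w b
      = ((k * (m.choose k * w^k * b^(m-k)) : ℕ) : ℝ) / (((w+b)^m : ℕ) : ℝ) := by
    intro k; unfold sampleProbR; push_cast; ring
  simp only [hterm]
  rw [← Finset.sum_div, ← Nat.cast_sum, urn_bin_num m w b hm]
  have hpow : (w+b)^m = (w+b)^(m-1) * (w+b) := by
    rw [← pow_succ]; congr 1; omega
  have hwb' : (0:ℝ) < (w:ℝ) + b := by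
    have h2 : 0 < w + b := by omega
    exact_mod_cast h2
  have hp : (0:ℝ) < (((w+b)^m : ℕ) : ℝ) := by positivity
  rw [div_eq_div_iff hp.ne' hwb'.ne']
  rw [hpow]
  push_cast
  ring

/-! ### Gamma function estimates -/

private lemma urn_gamma_upper (x s : ℝ) (hx : 0 < x) (hs0 : 0 ≤ s) (hs1 : s ≤ 1) :
    Real.Gamma (x + s) ≤ Real.Gamma x * x ^ s := by
  have hGx := Real.Gamma_pos_of_pos hx
  have hGxs := Real.Gamma_pos_of_pos (by linarith : 0 < x + s)
  have h := Real.convexOn_log_Gamma.2 (Set.mem_Ioi.mpr hx)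
      (Set.mem_Ioi.mpr (by linarith : (0:ℝ) < x + 1))
      (by linarith : (0:ℝ) ≤ 1 - s) hs0 (by ring)
  simp only [smul_eq_mul, Function.comp_apply] at h
  have harg : (1-s)*x + s*(x+1) = x + s := by ring
  rw [harg, Real.Gamma_add_one hx.ne', Real.log_mul hx.ne' hGx.ne'] at h
  calc Real.Gamma (x+s) = Real.exp (Real.log (Real.Gamma (x+s))) := (Real.exp_log hGxs).symm
    _ ≤ Real.exp (Real.log (Real.Gamma x) + s * Real.log x) := by
        apply Real.exp_le_exp.mpr; nlinarith [h]
    _ = Real.Gamma x * x ^ s := by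
        rw [Real.exp_add, Real.exp_log hGx, Real.rpow_def_of_pos hx, mul_comm s]

private lemma urn_gautschi (x s : ℝ) (hx : 1 ≤ x) (hs0 : 0 ≤ s) (hs1 : s ≤ 1) :
    |Real.Gamma (x + s) / Real.Gamma x - x ^ s| ≤ s := by
  have hx0 : (0:ℝ) < x := by linarith
  have hxs : (0:ℝ) < x + s := by linarith
  have hGx := Real.Gamma_pos_of_pos hx0
  have hGxs := Real.Gamma_pos_of_pos hxs
  have hupper : Real.Gamma (x+s) / Real.Gamma x ≤ x ^ s := by
    rw [div_le_iff₀ hGx, mul_comm]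
    exact urn_gamma_upper x s hx0 hs0 hs1
  have hgl : Real.Gamma (x + 1) ≤ Real.Gamma (x+s) * (x+s) ^ (1-s) := by
    have h := urn_gamma_upper (x+s) (1-s) hxs (by linarith) (by linarith)
    rwa [show x + s + (1-s) = x + 1 by ring] at h
  rw [Real.Gamma_add_one hx0.ne'] at hgl
  have hA : (0:ℝ) < (x+s) ^ s := Real.rpow_pos_of_pos hxs s
  have hP : (0:ℝ) < (x+s) ^ (1-s) := Real.rpow_pos_of_pos hxs (1-s)
  have hps : (x+s) ^ (1-s) * (x+s) ^ s = x + s := by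
    rw [← Real.rpow_add hxs, show (1-s) + s = 1 by ring, Real.rpow_one]
  have h2 : x ^ s ≤ (x+s) ^ s := Real.rpow_le_rpow hx0.le (by linarith) hs0
  have h3 : x ^ s ≤ x + s := by
    calc x ^ s ≤ x ^ (1:ℝ) := Real.rpow_le_rpow_of_exponent_le hx hs1
      _ = x := Real.rpow_one x
      _ ≤ x + s := by linarith
  have hx_le : x ≤ (Real.Gamma (x+s) / Real.Gamma x) * (x+s) ^ (1-s) := by
    rw [div_mul_eq_mul_div, le_div_iff₀ hGx]
    nlinarith [hgl]
  have h4 : x * (x+s) ^ s ≤ (Real.Gamma (x+s) / Real.Gamma x) * (x+s) := by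
    calc x * (x+s) ^ s ≤ ((Real.Gamma (x+s) / Real.Gamma x) * (x+s) ^ (1-s)) * (x+s) ^ s :=
          mul_le_mul_of_nonneg_right hx_le hA.le
      _ = (Real.Gamma (x+s) / Real.Gamma x) * (x+s) := by rw [mul_assoc, hps]
  have hlower : x ^ s - s ≤ Real.Gamma (x+s) / Real.Gamma x := by
    have hxx : x * x ^ s ≤ x * (x+s) ^ s := mul_le_mul_of_nonneg_left h2 hx0.le
    have hss : s * x ^ s ≤ s * (x+s) := mul_le_mul_of_nonneg_left h3 hs0
    nlinarith [h4, hxx, hss, hxs]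
  have hxsp : (0:ℝ) ≤ x ^ s := (Real.rpow_pos_of_pos hx0 s).le
  exact abs_le.mpr ⟨by linarith, by linarith⟩

private lemma urn_rpow_subadd (x y p : ℝ) (hx : 0 ≤ x) (hy : 0 ≤ y) (hp0 : 0 ≤ p) (hp1 : p ≤ 1) :
    (x + y) ^ p ≤ x ^ p + y ^ p := by
  have h := NNReal.rpow_add_le_add_rpow x.toNNReal y.toNNReal hp0 hp1
  have h2 := NNReal.coe_le_coe.mpr h
  push_cast at h2
  rwa [Real.coe_toNNReal x hx, Real.coe_toNNReal y hy] at h2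

/-! ### The urn recursion -/

private lemma urn_total {Ω : Type*} [m0 : MeasurableSpace Ω] {μ : Measure Ω}
    {mdlM : Bool} {m : ℕ} {a b : ℕ → ℤ} {σ : ℤ} {W0 B0 : ℕ}
    {W B : ℕ → Ω → ℕ} {R : ℕ → Ω → ℕ} {F : Filtration ℕ m0}
    (hurn : UrnScheme μ mdlM m a b σ W0 B0 W B R F) :
    ∀ n ω, (W n ω : ℤ) + (B n ω : ℤ) = ((W0 + B0 : ℕ) : ℤ) + σ * n := by
  intro n
  induction n with
  | zero => intro ω; rw [hurn.initW, hurn.initB]; push_cast; ring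
  | succ n ih =>
    intro ω
    have h1 := hurn.dynW n ω
    have h2 := hurn.dynB n ω
    have h3 := hurn.balanced (m - R (n+1) ω) (Nat.sub_le _ _)
    have h4 := ih ω
    rw [h1, h2]
    push_cast
    push_cast at h4
    linear_combination h4 + h3

private lemma urn_T0_pos {Ω : Type*} [m0 : MeasurableSpace Ω] {μ : Measure Ω}
    [IsProbabilityMeasure μ]
    {mdlM : Bool} {m : ℕ} {a b : ℕ → ℤ} {σ : ℤ} {W0 B0 : ℕ}
    {W B : ℕ → Ω → ℕ} {R : ℕ → Ω → ℕ} {F : Filtration ℕ m0}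
    (hurn : UrnScheme μ mdlM m a b σ W0 B0 W B R F) : 1 ≤ W0 + B0 := by
  have hO : Nonempty Ω := by
    by_contra h
    rw [not_nonempty_iff] at h
    have h1 : μ Set.univ = 1 := measure_univ
    rw [Set.univ_eq_empty_iff.mpr h] at h1
    simp at h1
  obtain ⟨ω⟩ := hO
  have hf := hurn.sampleFit 0 ω
  rw [hurn.initW, hurn.initB] at hf
  have hm1 := hurn.hm
  cases mdlM
  · simpa using hf
  · simp at hf; omega

private lemma urn_step {Ω : Type*} [m0 : MeasurableSpace Ω] {μ : Measure Ω}
    [IsProbabilityMeasure μ]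
    {mdlM : Bool} {m : ℕ} {a b : ℕ → ℤ} {σ : ℤ} {W0 B0 : ℕ}
    {W B : ℕ → Ω → ℕ} {R : ℕ → Ω → ℕ} {F : Filtration ℕ m0}
    (hurn : UrnScheme μ mdlM m a b σ W0 B0 W B R F) (n : ℕ) :
    ∫ ω, (W (n+1) ω : ℝ) ∂μ
      = ∫ ω, (W n ω : ℝ) ∂μ
        + ((a (m-1) : ℝ) - (a m : ℝ)) *
            ((m:ℝ) * (∫ ω, (W n ω : ℝ) ∂μ) / (((W0+B0 : ℕ):ℝ) + (σ:ℝ) * n))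
        + (a m : ℝ) := by
  have hm1 := hurn.hm
  have hσ1 := hurn.hσ
  set Tn : ℝ := ((W0+B0 : ℕ):ℝ) + (σ:ℝ) * n with hTn
  have hWB : ∀ ω, (W n ω : ℝ) + (B n ω : ℝ) = Tn := by
    intro ω
    have h := urn_total hurn n ω
    rw [hTn]; exact_mod_cast h
  have hWm : Measurable (W n) := (hurn.measW n).mono (F.le n) le_rfl
  have hBm : Measurable (B n) := (hurn.measB n).mono (F.le n) le_rfl
  have hRm : Measurable (R (n+1)) := (hurn.measR n).mono (F.le (n+1)) le_rfl
  have hWcm : Measurable (fun ω => (W n ω : ℝ)) := measurable_from_nat.comp hWm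
  set p : ℕ → Ω → ℝ := fun k ω =>
    if mdlM then sampleProbM m k (W n ω) (B n ω) else sampleProbR m k (W n ω) (B n ω)
    with hp
  have hpm : ∀ k, Measurable (p k) := by
    intro k
    have hc : p k = (fun q : ℕ × ℕ => if mdlM then sampleProbM m k q.1 q.2
        else sampleProbR m k q.1 q.2) ∘ (fun ω => (W n ω, B n ω)) := rfl
    rw [hc]
    exact Measurable.of_discrete.comp (hWm.prodMk hBm)
  have hp01 : ∀ k, k ≤ m → ∀ ω, 0 ≤ p k ω ∧ p k ω ≤ 1 := by
    intro k hk ω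
    rw [hp]
    cases mdlM
    · simp only [Bool.false_eq_true, if_false]
      exact ⟨sampleProbR_nonneg _ _ _ _, sampleProbR_le_one _ _ _ _ hk⟩
    · simp only [if_pos rfl]
      exact ⟨sampleProbM_nonneg _ _ _ _, sampleProbM_le_one _ _ _ _ hk⟩
  have hpint : ∀ k, k ≤ m → Integrable (p k) μ := by
    intro k hk
    refine (integrable_const (1:ℝ)).mono' (hpm k).aestronglyMeasurable (ae_of_all μ fun ω => ?_)
    rw [Real.norm_eq_abs, abs_of_nonneg (hp01 k hk ω).1]
    exact (hp01 k hk ω).2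
  have hSmeas : ∀ k : ℕ, MeasurableSet {ω | R (n+1) ω = k} := fun k =>
    hRm (measurableSet_singleton k)
  have hIndInt : ∀ k : ℕ, Integrable (({ω | R (n+1) ω = k}).indicator fun _ => (1:ℝ)) μ :=
    fun k => (integrable_const (1:ℝ)).indicator (hSmeas k)
  have hInd : ∀ k, k ≤ m →
      ∫ ω, ({ω' | R (n+1) ω' = k}).indicator (fun _ => (1:ℝ)) ω ∂μ = ∫ ω, p k ω ∂μ := by
    intro k hk
    calc ∫ ω, ({ω' | R (n+1) ω' = k}).indicator (fun _ => (1:ℝ)) ω ∂μ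
        = ∫ ω, (μ[({ω' | R (n+1) ω' = k}).indicator (fun _ => (1:ℝ)) | F n]) ω ∂μ :=
          (integral_condExp (F.le n)).symm
      _ = ∫ ω, p k ω ∂μ := integral_congr_ae (hurn.condLaw n k hk)
  have hsum : ∀ ω, ∑ k ∈ Finset.range (m+1), (k:ℝ) * p k ω = (m:ℝ) * (W n ω:ℝ) / Tn := by
    intro ω
    have hfit := hurn.sampleFit n ω
    rw [← hWB ω, hp]
    cases mdlM
    · simp only [Bool.false_eq_true, if_false]
      exact urn_meanR m _ _ hm1 (by simpa using hfit)
    · simp only [if_pos rfl]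
      exact urn_meanM m _ _ hm1 (by simpa using hfit)
  have hptR : ∀ ω, (R (n+1) ω : ℝ)
      = ∑ k ∈ Finset.range (m+1),
          (k:ℝ) * ({ω' | R (n+1) ω' = k}).indicator (fun _ => (1:ℝ)) ω := by
    intro ω
    rw [Finset.sum_eq_single (R (n+1) ω)]
    · have hmem : ω ∈ {ω' | R (n+1) ω' = R (n+1) ω} := rfl
      rw [Set.indicator_of_mem hmem, mul_one]
    · intro c _ hc
      have hmem : ω ∉ {ω' | R (n+1) ω' = c} := fun hmem => hc (Eq.symm hmem)
      rw [Set.indicator_of_notMem hmem, mul_zero]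
    · intro h
      exact absurd (Finset.mem_range.mpr (Nat.lt_succ_of_le (hurn.sampleLe n ω))) h
  have hER : ∫ ω, (R (n+1) ω : ℝ) ∂μ = (m:ℝ) * (∫ ω, (W n ω : ℝ) ∂μ) / Tn := by
    calc ∫ ω, (R (n+1) ω : ℝ) ∂μ
        = ∫ ω, ∑ k ∈ Finset.range (m+1),
            (k:ℝ) * ({ω' | R (n+1) ω' = k}).indicator (fun _ => (1:ℝ)) ω ∂μ :=
          integral_congr_ae (ae_of_all μ hptR)
      _ = ∑ k ∈ Finset.range (m+1), ∫ ω,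
            (k:ℝ) * ({ω' | R (n+1) ω' = k}).indicator (fun _ => (1:ℝ)) ω ∂μ :=
          integral_finset_sum _ (fun k _ => (hIndInt k).const_mul _)
      _ = ∑ k ∈ Finset.range (m+1), (k:ℝ) * ∫ ω, p k ω ∂μ := by
          refine Finset.sum_congr rfl fun k hk => ?_
          rw [integral_const_mul, hInd k (Nat.lt_succ_iff.mp (Finset.mem_range.mp hk))]
      _ = ∫ ω, ∑ k ∈ Finset.range (m+1), (k:ℝ) * p k ω ∂μ := by
          rw [integral_finset_sum _ (fun k hk =>
            ((hpint k (Nat.lt_succ_iff.mp (Finset.mem_range.mp hk))).const_mul _))]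
          exact Finset.sum_congr rfl fun k _ => (integral_const_mul _ _).symm
      _ = ∫ ω, (m:ℝ) * (W n ω:ℝ) / Tn ∂μ := integral_congr_ae (ae_of_all μ hsum)
      _ = (m:ℝ) * (∫ ω, (W n ω : ℝ) ∂μ) / Tn := by
          simp_rw [mul_div_assoc]
          rw [integral_const_mul, integral_div]
  have hptW : ∀ ω, (W (n+1) ω : ℝ)
      = (W n ω : ℝ) + ((a (m-1):ℝ) - (a m:ℝ)) * (R (n+1) ω : ℝ) + (a m : ℝ) := by
    intro ω
    have h := hurn.dynW n ω
    have haff := hurn.affine (m - R (n+1) ω) (Nat.sub_le _ _)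
    have hle := hurn.sampleLe n ω
    rw [haff, Nat.cast_sub hle] at h
    have h2 : (W (n+1) ω : ℤ)
        = (W n ω:ℤ) + (a (m-1) - a m) * (R (n+1) ω : ℤ) + a m := by
      rw [h]; ring
    exact_mod_cast h2
  have hRint : Integrable (fun ω => (R (n+1) ω:ℝ)) μ := by
    refine (integrable_const (m:ℝ)).mono'
      ((measurable_from_nat.comp hRm)).aestronglyMeasurable (ae_of_all μ fun ω => ?_)
    rw [Real.norm_eq_abs, abs_of_nonneg (by positivity)]
    exact_mod_cast hurn.sampleLe n ω
  have hWint : Integrable (fun ω => (W n ω:ℝ)) μ := by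
    refine (integrable_const Tn).mono' hWcm.aestronglyMeasurable (ae_of_all μ fun ω => ?_)
    rw [Real.norm_eq_abs, abs_of_nonneg (by positivity)]
    nlinarith [hWB ω, (show (0:ℝ) ≤ (B n ω:ℝ) by positivity)]
  have hsum1 : Integrable (fun ω => (W n ω:ℝ) + ((a (m-1):ℝ)-(a m:ℝ)) * (R (n+1) ω:ℝ)) μ :=
    hWint.add (hRint.const_mul ((a (m-1):ℝ)-(a m:ℝ)))
  have hcR : Integrable (fun ω => ((a (m-1):ℝ)-(a m:ℝ)) * (R (n+1) ω:ℝ)) μ :=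
    hRint.const_mul ((a (m-1):ℝ)-(a m:ℝ))
  calc ∫ ω, (W (n+1) ω:ℝ) ∂μ
      = ∫ ω, ((W n ω:ℝ) + ((a (m-1):ℝ)-(a m:ℝ)) * (R (n+1) ω:ℝ) + (a m:ℝ)) ∂μ :=
        integral_congr_ae (ae_of_all μ hptW)
    _ = (∫ ω, ((W n ω:ℝ) + ((a (m-1):ℝ)-(a m:ℝ)) * (R (n+1) ω:ℝ)) ∂μ) + (a m:ℝ) := by
        rw [integral_add hsum1 (integrable_const ((a m : ℤ):ℝ)), integral_const]
        simp
    _ = (∫ ω, (W n ω:ℝ)∂μ) + ((a (m-1):ℝ)-(a m:ℝ)) * (∫ ω, (R (n+1) ω:ℝ)∂μ) + (a m:ℝ) := by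
        rw [integral_add hWint hcR, integral_const_mul]
    _ = _ := by rw [hER]

/-! ### Solving the recursion -/

private lemma urn_solve_rec (x : ℕ → ℝ) (Λ t0 am : ℝ) (ht0 : 0 < t0)
    (hΛ0 : 0 < Λ) (hΛ1 : Λ < 1)
    (hrec : ∀ n : ℕ, x (n+1) = x n + Λ/((n:ℝ)+t0) * x n + am) :
    ∀ n : ℕ, x n = (am/(1-Λ)) * ((n:ℝ) + t0)
      + (x 0 - (am/(1-Λ))*t0) * (Real.Gamma t0 / Real.Gamma (t0+Λ)) *
          (Real.Gamma ((n:ℝ)+t0+Λ)/Real.Gamma ((n:ℝ)+t0)) := by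
  have hG0 : (0:ℝ) < Real.Gamma t0 := Real.Gamma_pos_of_pos ht0
  have hG0' : (0:ℝ) < Real.Gamma (t0+Λ) := Real.Gamma_pos_of_pos (by linarith)
  have h1Λ : (0:ℝ) < 1 - Λ := by linarith
  intro n
  induction n with
  | zero =>
    push_cast
    simp only [zero_add]
    field_simp
    ring
  | succ n ih =>
    have hnt : (0:ℝ) < (n:ℝ) + t0 := by positivity
    have hGn : (0:ℝ) < Real.Gamma ((n:ℝ)+t0) := Real.Gamma_pos_of_pos hnt
    have hGnΛ : (0:ℝ) < Real.Gamma ((n:ℝ)+t0+Λ) := Real.Gamma_pos_of_pos (by linarith)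
    have h2 : ((n+1 : ℕ):ℝ) + t0 + Λ = ((n:ℝ)+t0+Λ) + 1 := by push_cast; ring
    have h3 : ((n+1 : ℕ):ℝ) + t0 = ((n:ℝ)+t0) + 1 := by push_cast; ring
    rw [hrec n, ih, h2, h3, Real.Gamma_add_one (by linarith : (n:ℝ)+t0+Λ ≠ 0),
        Real.Gamma_add_one hnt.ne']
    field_simp
    ring

/-- Exact and asymptotic formula for `E[W_n]` in large-index urns and
triangular urns with `Λ < 1`:
`E[W_n] = a_m (n + T₀/σ)/(1-Λ) + (W₀ - a_m T₀/(σ(1-Λ))) Γ(n+T₀/σ+Λ)Γ(T₀/σ)/(Γ(n+T₀/σ)Γ(T₀/σ+Λ))`,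
and `E[W_n] = ζ n + ϑ n^Λ + O(1)`. -/
theorem urn_mean_asymptotics {Ω : Type*} [m0 : MeasurableSpace Ω] (μ : Measure Ω)
    [IsProbabilityMeasure μ] (mdlM : Bool) (m : ℕ) (a b : ℕ → ℤ) (σ : ℤ) (W0 B0 : ℕ)
    (W B : ℕ → Ω → ℕ) (R : ℕ → Ω → ℕ) (F : Filtration ℕ m0)
    (hurn : UrnScheme μ mdlM m a b σ W0 B0 W B R F)
    (hcase : (1 ≤ a m ∧ 1 ≤ b 0 ∧ 1 / 2 < urnIndex m a σ ∧ urnIndex m a σ < 1) ∨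
             (a m = 0 ∧ 0 < urnIndex m a σ ∧ urnIndex m a σ < 1)) :
    (∀ n : ℕ, 1 ≤ n →
      ∫ ω, (W n ω : ℝ) ∂μ =
        (a m : ℝ) * ((n : ℝ) + ((W0 + B0 : ℕ) : ℝ) / (σ : ℝ)) / (1 - urnIndex m a σ) +
        ((W0 : ℝ) - (a m : ℝ) * ((W0 + B0 : ℕ) : ℝ) / ((σ : ℝ) * (1 - urnIndex m a σ))) *
          (Real.Gamma ((n : ℝ) + ((W0 + B0 : ℕ) : ℝ) / (σ : ℝ) + urnIndex m a σ) *
              Real.Gamma (((W0 + B0 : ℕ) : ℝ) / (σ : ℝ))) /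
          (Real.Gamma ((n : ℝ) + ((W0 + B0 : ℕ) : ℝ) / (σ : ℝ)) *
              Real.Gamma (((W0 + B0 : ℕ) : ℝ) / (σ : ℝ) + urnIndex m a σ))) ∧
    ∃ C : ℝ, ∀ n : ℕ, 1 ≤ n →
      |(∫ ω, (W n ω : ℝ) ∂μ) - urnZeta m a σ * (n : ℝ) -
          ((W0 : ℝ) - (a m : ℝ) * ((W0 + B0 : ℕ) : ℝ) / ((σ : ℝ) * (1 - urnIndex m a σ))) *
            (Real.Gamma (((W0 + B0 : ℕ) : ℝ) / (σ : ℝ)) /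
              Real.Gamma (((W0 + B0 : ℕ) : ℝ) / (σ : ℝ) + urnIndex m a σ)) *
            (n : ℝ) ^ (urnIndex m a σ)| ≤ C  := by
  have hm1 : 1 ≤ m := hurn.hm
  have hσ1 : 1 ≤ σ := hurn.hσ
  have hσR : (0:ℝ) < (σ:ℝ) := by exact_mod_cast hσ1
  have hΛ0 : 0 < urnIndex m a σ := by
    rcases hcase with ⟨_, _, h, _⟩ | ⟨_, h, _⟩
    · linarith
    · exact h
  have hΛ1 : urnIndex m a σ < 1 := by
    rcases hcase with ⟨_, _, _, h⟩ | ⟨_, _, h⟩ <;> exact h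
  have h1Λ : (0:ℝ) < 1 - urnIndex m a σ := by linarith
  have hT01 : 1 ≤ W0 + B0 := urn_T0_pos hurn
  have hT01R : (1:ℝ) ≤ ((W0+B0:ℕ):ℝ) := by exact_mod_cast hT01
  have ht0 : (0:ℝ) < ((W0+B0:ℕ):ℝ)/(σ:ℝ) := div_pos (by linarith) hσR
  have hGt0 : (0:ℝ) < Real.Gamma (((W0+B0:ℕ):ℝ)/(σ:ℝ)) := Real.Gamma_pos_of_pos ht0
  have hGt0Λ : (0:ℝ) < Real.Gamma (((W0+B0:ℕ):ℝ)/(σ:ℝ) + urnIndex m a σ) :=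
    Real.Gamma_pos_of_pos (by linarith)
  have hrec : ∀ n : ℕ, (∫ ω, (W (n+1) ω:ℝ)∂μ) = (∫ ω, (W n ω:ℝ)∂μ)
      + urnIndex m a σ/((n:ℝ) + ((W0+B0:ℕ):ℝ)/(σ:ℝ)) * (∫ ω, (W n ω:ℝ)∂μ)
      + ((a m : ℤ):ℝ) := by
    intro n
    rw [urn_step hurn n]
    have hnt0 : (0:ℝ) < (n:ℝ) + ((W0+B0:ℕ):ℝ)/(σ:ℝ) := by positivity
    have hT : (0:ℝ) < ((W0+B0:ℕ):ℝ) + (σ:ℝ)*n := by positivity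
    have hmid : ((a (m-1):ℝ) - (a m:ℝ)) *
          ((m:ℝ) * (∫ ω, (W n ω:ℝ)∂μ) / (((W0+B0:ℕ):ℝ) + (σ:ℝ)*n))
        = urnIndex m a σ/((n:ℝ) + ((W0+B0:ℕ):ℝ)/(σ:ℝ)) * (∫ ω, (W n ω:ℝ)∂μ) := by
      unfold urnIndex
      rw [div_div]
      rw [show (σ:ℝ) * ((n:ℝ) + ((W0+B0:ℕ):ℝ)/(σ:ℝ)) = ((W0+B0:ℕ):ℝ) + (σ:ℝ)*(n:ℝ) by
        field_simp; ring]
      ring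
    linarith [hmid]
  have hx0 : (∫ ω, (W 0 ω:ℝ)∂μ) = (W0:ℝ) := by
    simp only [hurn.initW]
    simp
  have hexact : ∀ n : ℕ, (∫ ω, (W n ω:ℝ)∂μ)
      = (((a m : ℤ):ℝ)/(1-urnIndex m a σ)) * ((n:ℝ) + ((W0+B0:ℕ):ℝ)/(σ:ℝ))
        + ((∫ ω, (W 0 ω:ℝ)∂μ) - (((a m : ℤ):ℝ)/(1-urnIndex m a σ))*(((W0+B0:ℕ):ℝ)/(σ:ℝ)))
          * (Real.Gamma (((W0+B0:ℕ):ℝ)/(σ:ℝ)) /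
              Real.Gamma (((W0+B0:ℕ):ℝ)/(σ:ℝ)+urnIndex m a σ)) *
          (Real.Gamma ((n:ℝ)+((W0+B0:ℕ):ℝ)/(σ:ℝ)+urnIndex m a σ)
            / Real.Gamma ((n:ℝ)+((W0+B0:ℕ):ℝ)/(σ:ℝ))) :=
    urn_solve_rec (fun n => ∫ ω, (W n ω:ℝ)∂μ) (urnIndex m a σ)
      (((W0+B0:ℕ):ℝ)/(σ:ℝ)) ((a m : ℤ):ℝ) ht0 hΛ0 hΛ1 hrec
  simp only [hx0] at hexact
  constructor
  · intro n hn
    have h := hexact n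
    have hnt0 : (0:ℝ) < (n:ℝ) + ((W0+B0:ℕ):ℝ)/(σ:ℝ) := by positivity
    have hGn : (0:ℝ) < Real.Gamma ((n:ℝ)+((W0+B0:ℕ):ℝ)/(σ:ℝ)) := Real.Gamma_pos_of_pos hnt0
    have hGnΛ : (0:ℝ) < Real.Gamma ((n:ℝ)+((W0+B0:ℕ):ℝ)/(σ:ℝ)+urnIndex m a σ) :=
      Real.Gamma_pos_of_pos (by linarith)
    rw [h]
    field_simp
  · refine ⟨|((a m : ℤ):ℝ)/(1-urnIndex m a σ) * (((W0+B0:ℕ):ℝ)/(σ:ℝ))|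
      + |((W0:ℝ) - ((a m : ℤ):ℝ) * ((W0+B0:ℕ):ℝ) / ((σ:ℝ) * (1 - urnIndex m a σ)))
          * (Real.Gamma (((W0+B0:ℕ):ℝ)/(σ:ℝ)) /
              Real.Gamma (((W0+B0:ℕ):ℝ)/(σ:ℝ) + urnIndex m a σ))|
        * (urnIndex m a σ + (((W0+B0:ℕ):ℝ)/(σ:ℝ)) ^ (urnIndex m a σ)), fun n hn => ?_⟩
    have h := hexact n
    have hn1 : (1:ℝ) ≤ (n:ℝ) := by exact_mod_cast hn
    have hnt0 : (0:ℝ) < (n:ℝ) + ((W0+B0:ℕ):ℝ)/(σ:ℝ) := by positivity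
    have hX1 : (1:ℝ) ≤ (n:ℝ) + ((W0+B0:ℕ):ℝ)/(σ:ℝ) := by linarith
    have hga := urn_gautschi ((n:ℝ)+((W0+B0:ℕ):ℝ)/(σ:ℝ)) (urnIndex m a σ)
      hX1 hΛ0.le hΛ1.le
    have hmono : (n:ℝ)^(urnIndex m a σ) ≤ ((n:ℝ)+((W0+B0:ℕ):ℝ)/(σ:ℝ))^(urnIndex m a σ) :=
      Real.rpow_le_rpow (by positivity) (by linarith) hΛ0.le
    have hsub : ((n:ℝ)+((W0+B0:ℕ):ℝ)/(σ:ℝ))^(urnIndex m a σ)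
        ≤ (n:ℝ)^(urnIndex m a σ) + (((W0+B0:ℕ):ℝ)/(σ:ℝ))^(urnIndex m a σ) :=
      urn_rpow_subadd _ _ _ (by positivity) ht0.le hΛ0.le hΛ1.le
    have hGbound : |Real.Gamma ((n:ℝ)+((W0+B0:ℕ):ℝ)/(σ:ℝ)+urnIndex m a σ)
          / Real.Gamma ((n:ℝ)+((W0+B0:ℕ):ℝ)/(σ:ℝ)) - (n:ℝ)^(urnIndex m a σ)|
        ≤ urnIndex m a σ + (((W0+B0:ℕ):ℝ)/(σ:ℝ))^(urnIndex m a σ) := by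
      have h1 : Real.Gamma ((n:ℝ)+((W0+B0:ℕ):ℝ)/(σ:ℝ)+urnIndex m a σ)
            / Real.Gamma ((n:ℝ)+((W0+B0:ℕ):ℝ)/(σ:ℝ)) - (n:ℝ)^(urnIndex m a σ)
          = (Real.Gamma ((n:ℝ)+((W0+B0:ℕ):ℝ)/(σ:ℝ)+urnIndex m a σ)
              / Real.Gamma ((n:ℝ)+((W0+B0:ℕ):ℝ)/(σ:ℝ))
              - ((n:ℝ)+((W0+B0:ℕ):ℝ)/(σ:ℝ))^(urnIndex m a σ))
            + (((n:ℝ)+((W0+B0:ℕ):ℝ)/(σ:ℝ))^(urnIndex m a σ) - (n:ℝ)^(urnIndex m a σ)) := by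
        ring
      rw [h1]
      refine (abs_add_le _ _).trans (add_le_add hga ?_)
      rw [abs_of_nonneg (by linarith)]
      linarith
    have hdiff : (∫ ω, (W n ω:ℝ)∂μ) - urnZeta m a σ * (n:ℝ)
          - ((W0:ℝ) - ((a m : ℤ):ℝ) * ((W0+B0:ℕ):ℝ) / ((σ:ℝ) * (1 - urnIndex m a σ)))
            * (Real.Gamma (((W0+B0:ℕ):ℝ)/(σ:ℝ)) /
                Real.Gamma (((W0+B0:ℕ):ℝ)/(σ:ℝ) + urnIndex m a σ))
            * (n:ℝ)^(urnIndex m a σ)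
        = ((a m : ℤ):ℝ)/(1-urnIndex m a σ) * (((W0+B0:ℕ):ℝ)/(σ:ℝ))
          + ((W0:ℝ) - ((a m : ℤ):ℝ) * ((W0+B0:ℕ):ℝ) / ((σ:ℝ) * (1 - urnIndex m a σ)))
            * (Real.Gamma (((W0+B0:ℕ):ℝ)/(σ:ℝ)) /
                Real.Gamma (((W0+B0:ℕ):ℝ)/(σ:ℝ) + urnIndex m a σ))
            * (Real.Gamma ((n:ℝ)+((W0+B0:ℕ):ℝ)/(σ:ℝ)+urnIndex m a σ)
                / Real.Gamma ((n:ℝ)+((W0+B0:ℕ):ℝ)/(σ:ℝ)) - (n:ℝ)^(urnIndex m a σ)) := by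
      have hGn : (0:ℝ) < Real.Gamma ((n:ℝ)+((W0+B0:ℕ):ℝ)/(σ:ℝ)) := Real.Gamma_pos_of_pos hnt0
      have hGnΛ : (0:ℝ) < Real.Gamma ((n:ℝ)+((W0+B0:ℕ):ℝ)/(σ:ℝ)+urnIndex m a σ) :=
        Real.Gamma_pos_of_pos (by linarith)
      have hcoef : ((a m : ℤ):ℝ) * ((W0+B0:ℕ):ℝ) / ((σ:ℝ) * (1 - urnIndex m a σ))
          = ((a m : ℤ):ℝ)/(1-urnIndex m a σ) * (((W0+B0:ℕ):ℝ)/(σ:ℝ)) := by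
        rw [div_mul_div_comm, mul_comm ((1:ℝ)-urnIndex m a σ) ((σ:ℝ))]
      rw [h, hcoef]
      unfold urnZeta
      ring
    rw [hdiff]
    refine (abs_add_le _ _).trans (add_le_add le_rfl ?_)
    rw [abs_mul]
    exact mul_le_mul_of_nonneg_left hGbound (abs_nonneg _)
end
end

section
/- Let (X_n)_{n≥1} be a sequence of real random variables and (g_n)_{n≥1} a real sequence such that X_n − g_n is integer-valued for every n ≥ 1. Suppose that for some α > 0 and some almost surely finite random variable X, n^{−α}·X_n converges to X in distribution, and that K := liminf_{n→∞} n^{α}·max_{m∈ℤ} P(X_n − g_n = m) < ∞. Then the distribution of X is absolutely continuous with respect to Lebesgue measure on (−∞,∞) and admits a density bounded uniformly by K. -/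
/-!
Testing against Urysohn functions (which needs no measurability of the `X n`) gives
`P(X ∈ [a, b]) ≤ liminf P(n^{-α} X_n ∈ (a - δ, b + δ))`. The window
`(n^α (a - δ), n^α (b + δ))` contains at most `n^α (b - a + 2δ) + 1` points of the lattice
`g_n + ℤ`, each of mass at most `max_m P(X_n - g_n = m)`, so this liminf is at most
`(b - a + 2δ) K`. Hence `P(X ∈ (a, b]) ≤ K (b - a)`: the function `K x - F x` is monotone for
the distribution function `F` of `X`, so the law of `X` is at most `K` times Lebesgue measure,
and its Radon-Nikodym derivative is bounded by `K`.
-/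

open MeasureTheory Filter Set Topology ENNReal

noncomputable section

open scoped BoundedContinuousFunction NNReal

theorem measure_le_liminf_measure_preimage_of_forall_integral_tendsto
    {Ω E ι : Type*} [MeasurableSpace Ω] [TopologicalSpace E] [NormalSpace E] [MeasurableSpace E]
    [OpensMeasurableSpace E] {μ : Measure Ω} {ν : Measure E} [IsFiniteMeasure ν]
    {l : Filter ι} [l.NeBot] {Y : ι → Ω → E}
    (hY : ∀ f : E →ᵇ ℝ, Tendsto (fun i => ∫ ω, f (Y i ω) ∂μ) l (𝓝 (∫ x, f x ∂ν)))
    {F U : Set E} (hF : IsClosed F) (hU : IsOpen U) (hFU : F ⊆ U) :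
    ν F ≤ liminf (fun i => μ (Y i ⁻¹' U)) l := by
  obtain ⟨f, hf0, hf1, hf01⟩ := exists_continuous_zero_one_of_isClosed hU.isClosed_compl hF
    (disjoint_compl_left_iff_subset.mpr hFU)
  let fb : E →ᵇ ℝ := .mkOfBound f 1 fun x y => Real.dist_le_of_mem_Icc_01 (hf01 x) (hf01 y)
  calc ν F ≤ ENNReal.ofReal (∫ x, fb x ∂ν) :=
        (fb.integrable ν).measure_le_integral (.of_forall fun x => (hf01 x).1)
          fun x hx => (hf1 hx).ge
    _ = liminf (fun i => ENNReal.ofReal (∫ ω, fb (Y i ω) ∂μ)) l :=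
        ((ENNReal.continuous_ofReal.tendsto _).comp (hY fb)).liminf_eq.symm
    _ ≤ liminf (fun i => μ (Y i ⁻¹' U)) l :=
        liminf_le_liminf <| .of_forall fun i => integral_le_measure
          (fun ω _ => (hf01 _).2) fun ω hω => (hf0 hω).le

theorem Int.card_Icc_ceil_floor_le {x y : ℝ} (hxy : x ≤ y) :
    ((Finset.Icc ⌈x⌉ ⌊y⌋).card : ℝ) ≤ y - x + 1 := by
  have hmax : (((⌊y⌋ + 1 - ⌈x⌉).toNat : ℤ) : ℝ) = max ((⌊y⌋ : ℝ) + 1 - ⌈x⌉) 0 := by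
    rw [Int.toNat_eq_max]; push_cast; rfl
  rw [Int.card_Icc, ← Int.cast_natCast, hmax]
  exact max_le (by linarith [Int.floor_le y, Int.le_ceil x]) (by linarith)

section Lattice

variable {Ω : Type*} [MeasurableSpace Ω]

def maxLatticeMass (μ : Measure Ω) (Z : Ω → ℝ) (g : ℝ) : ℝ≥0∞ :=
  ⨆ z : ℤ, μ {ω | Z ω - g = z}

theorem measure_preimage_Icc_le_mul_maxLatticeMass (μ : Measure Ω) {Z : Ω → ℝ} {g : ℝ}
    (hZ : ∀ ω, ∃ z : ℤ, Z ω - g = z) {c d : ℝ} (hcd : c ≤ d) :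
    μ (Z ⁻¹' Icc c d) ≤ ENNReal.ofReal (d - c + 1) * maxLatticeMass μ Z g := by
  set S := Finset.Icc ⌈c - g⌉ ⌊d - g⌋
  have hcover : Z ⁻¹' Icc c d ⊆ ⋃ z ∈ S, {ω | Z ω - g = z} := by
    intro ω hω
    obtain ⟨z, hz⟩ := hZ ω
    refine mem_biUnion (Finset.mem_Icc.2 ⟨Int.ceil_le.2 ?_, Int.le_floor.2 ?_⟩) hz
    · linarith [hω.1]
    · linarith [hω.2]
  have hcard : (S.card : ℝ≥0∞) ≤ ENNReal.ofReal (d - c + 1) := by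
    rw [← ENNReal.ofReal_natCast]
    exact ENNReal.ofReal_le_ofReal <| (Int.card_Icc_ceil_floor_le (by linarith)).trans_eq (by ring)
  calc μ (Z ⁻¹' Icc c d) ≤ ∑ z ∈ S, μ {ω | Z ω - g = z} :=
        (measure_mono hcover).trans (measure_biUnion_finset_le _ _)
    _ ≤ ∑ _z ∈ S, maxLatticeMass μ Z g :=
        Finset.sum_le_sum fun z _ => le_iSup (fun z : ℤ => μ {ω | Z ω - g = z}) z
    _ = S.card * maxLatticeMass μ Z g := by rw [Finset.sum_const, nsmul_eq_mul]
    _ ≤ ENNReal.ofReal (d - c + 1) * maxLatticeMass μ Z g := by gcongr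

end Lattice

theorem ENNReal.liminf_ofReal_mul_add_one_mul_le {s : ℕ → ℝ} (hs : Tendsto s atTop atTop)
    (M : ℕ → ℝ≥0∞) (hfin : liminf (fun n => ENNReal.ofReal (s n) * M n) atTop ≠ ∞) (L : ℝ) :
    liminf (fun n => ENNReal.ofReal (s n * L + 1) * M n) atTop ≤
      ENNReal.ofReal L * liminf (fun n => ENNReal.ofReal (s n) * M n) atTop := by
  have hsplit : ∀ᶠ n in atTop, ENNReal.ofReal (s n * L + 1) * M n =
      ENNReal.ofReal (L + (s n)⁻¹) * (ENNReal.ofReal (s n) * M n) := by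
    filter_upwards [hs.eventually_gt_atTop 0] with n hn
    rw [← mul_assoc, ← ENNReal.ofReal_mul' hn.le, add_mul, inv_mul_cancel₀ hn.ne', mul_comm L]
  have hlim : Tendsto (fun n => ENNReal.ofReal (L + (s n)⁻¹)) atTop (𝓝 (ENNReal.ofReal L)) := by
    simpa using ENNReal.tendsto_ofReal (tendsto_const_nhds.add hs.inv_tendsto_atTop)
  calc liminf (fun n => ENNReal.ofReal (s n * L + 1) * M n) atTop
      = liminf (fun n => ENNReal.ofReal (L + (s n)⁻¹) * (ENNReal.ofReal (s n) * M n)) atTop :=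
        liminf_congr hsplit
    _ ≤ limsup (fun n => ENNReal.ofReal (L + (s n)⁻¹)) atTop *
          liminf (fun n => ENNReal.ofReal (s n) * M n) atTop :=
        ENNReal.liminf_mul_le (.inr hfin) (.inl (hlim.limsup_eq ▸ ofReal_ne_top))
    _ = ENNReal.ofReal L * liminf (fun n => ENNReal.ofReal (s n) * M n) atTop := by
        rw [hlim.limsup_eq]

theorem measure_le_ofReal_mul_liminf_maxLatticeMass {Ω : Type*} [MeasurableSpace Ω]
    {μ : Measure Ω} {ν : Measure ℝ} [IsFiniteMeasure ν] {Z : ℕ → Ω → ℝ} {g s : ℕ → ℝ}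
    (hZ : ∀ᶠ n in atTop, ∀ ω, ∃ z : ℤ, Z n ω - g n = z) (hs : Tendsto s atTop atTop)
    (hconv : ∀ f : ℝ →ᵇ ℝ,
      Tendsto (fun n => ∫ ω, f ((s n)⁻¹ * Z n ω) ∂μ) atTop (𝓝 (∫ x, f x ∂ν)))
    (hfin : liminf (fun n => ENNReal.ofReal (s n) * maxLatticeMass μ (Z n) (g n)) atTop ≠ ∞)
    {F : Set ℝ} (hF : IsClosed F) {c d : ℝ} (hcd : c ≤ d) (hFcd : F ⊆ Ioo c d) :
    ν F ≤ ENNReal.ofReal (d - c) *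
      liminf (fun n => ENNReal.ofReal (s n) * maxLatticeMass μ (Z n) (g n)) atTop := by
  have hscaled : ∀ᶠ n in atTop, μ ((fun ω => (s n)⁻¹ * Z n ω) ⁻¹' Ioo c d) ≤
      ENNReal.ofReal (s n * (d - c) + 1) * maxLatticeMass μ (Z n) (g n) := by
    filter_upwards [hZ, hs.eventually_gt_atTop 0] with n hZn hsn
    have hsub : (fun ω => (s n)⁻¹ * Z n ω) ⁻¹' Ioo c d ⊆ Z n ⁻¹' Icc (s n * c) (s n * d) :=
      fun ω hω => ⟨((lt_inv_mul_iff₀ hsn).1 hω.1).le, ((inv_mul_lt_iff₀ hsn).1 hω.2).le⟩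
    calc μ _ ≤ μ (Z n ⁻¹' Icc (s n * c) (s n * d)) := measure_mono hsub
      _ ≤ _ := measure_preimage_Icc_le_mul_maxLatticeMass μ hZn (by gcongr)
      _ = _ := by rw [mul_sub]
  calc ν F ≤ liminf (fun n => μ ((fun ω => (s n)⁻¹ * Z n ω) ⁻¹' Ioo c d)) atTop :=
        measure_le_liminf_measure_preimage_of_forall_integral_tendsto hconv hF isOpen_Ioo hFcd
    _ ≤ liminf (fun n => ENNReal.ofReal (s n * (d - c) + 1) * maxLatticeMass μ (Z n) (g n))
          atTop := liminf_le_liminf hscaled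
    _ ≤ _ := ENNReal.liminf_ofReal_mul_add_one_mul_le hs _ hfin _

theorem ENNReal.le_mul_ofReal_of_forall_pos_le {x : ℝ≥0∞} {C : ℝ≥0} {r : ℝ}
    (h : ∀ δ > 0, x ≤ C * ENNReal.ofReal (r + δ)) : x ≤ C * ENNReal.ofReal r := by
  have hcont : Continuous fun δ : ℝ => (C : ℝ≥0∞) * ENNReal.ofReal (r + δ) :=
    (ENNReal.continuous_const_mul coe_ne_top).comp
      (ENNReal.continuous_ofReal.comp (continuous_const.add continuous_id))
  refine ge_of_tendsto (x := 𝓝[>] (0 : ℝ)) ?_ (eventually_nhdsWithin_of_forall h)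
  simpa using (hcont.tendsto 0).mono_left nhdsWithin_le_nhds

theorem StieltjesFunction.measure_le_smul_volume {f : StieltjesFunction ℝ} {c : ℝ≥0}
    (hf : ∀ a b, a ≤ b → f b - f a ≤ c * (b - a)) : f.measure ≤ (c : ℝ≥0∞) • volume := by
  let G : StieltjesFunction ℝ :=
    { toFun := fun x => c * x - f x
      mono' := fun a b hab => by linarith [hf a b hab]
      right_continuous' := fun x =>
        (continuous_const.mul continuous_id).continuousWithinAt.sub (f.right_continuous x) }
  have hsum : f + G = c • StieltjesFunction.id := by
    ext x
    change f x + (c * x - f x) = c * x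
    ring
  calc f.measure ≤ f.measure + G.measure := Measure.le_add_right le_rfl
    _ = (c : ℝ≥0∞) • volume := by
        rw [← measure_add, hsum, measure_smul, ← Real.volume_eq_stieltjes_id]; rfl

theorem measure_le_smul_volume_of_measure_Ioc_le {ν : Measure ℝ} [IsProbabilityMeasure ν]
    {c : ℝ≥0} (h : ∀ a b, a ≤ b → ν (Ioc a b) ≤ c * ENNReal.ofReal (b - a)) :
    ν ≤ (c : ℝ≥0∞) • volume := by
  rw [← ProbabilityTheory.measure_cdf ν]
  refine StieltjesFunction.measure_le_smul_volume fun a b hab => ?_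
  have hIoc := h a b hab
  rwa [← ProbabilityTheory.measure_cdf ν, StieltjesFunction.measure_Ioc, ← ofReal_coe_nnreal,
    ← ENNReal.ofReal_mul c.coe_nonneg, ENNReal.ofReal_le_ofReal_iff (by positivity)] at hIoc

theorem MeasureTheory.Measure.rnDeriv_le_of_le_smul {α : Type*} [MeasurableSpace α]
    {ν μ : Measure α} [SigmaFinite μ] {c : ℝ≥0∞} (h : ν ≤ c • μ) :
    ν.rnDeriv μ ≤ᵐ[μ] fun _ => c := by
  refine ae_le_of_forall_setLIntegral_le_of_sigmaFinite (ν.measurable_rnDeriv μ) fun s _ _ => ?_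
  rw [setLIntegral_const]
  exact (Measure.setLIntegral_rnDeriv_le s).trans ((h s).trans_eq (by simp))

theorem MeasureTheory.Measure.exists_density_le_of_le_smul {α : Type*} [MeasurableSpace α]
    {ν μ : Measure α} [SigmaFinite μ] [ν.HaveLebesgueDecomposition μ] {c : ℝ≥0}
    (h : ν ≤ (c : ℝ≥0∞) • μ) :
    ∃ f : α → ℝ, (∀ x, 0 ≤ f x) ∧ (∀ x, f x ≤ c) ∧
      ν = μ.withDensity fun x => ENNReal.ofReal (f x) := by
  refine ⟨fun x => min (ν.rnDeriv μ x).toReal c, fun x => le_min toReal_nonneg c.coe_nonneg,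
    fun x => min_le_right _ _, ?_⟩
  calc ν = μ.withDensity (ν.rnDeriv μ) :=
        (Measure.withDensity_rnDeriv_eq ν μ (Measure.absolutelyContinuous_of_le_smul h)).symm
    _ = _ := withDensity_congr_ae <| by
        filter_upwards [Measure.rnDeriv_le_of_le_smul h] with x hx
        rw [min_eq_left (toReal_le_coe_of_le_coe hx),
          ofReal_toReal (ne_top_of_le_ne_top coe_ne_top hx)]

/-- If `X_n - g_n` is integer-valued, `n^{-α} X_n → X` in distribution
and `K = liminf_n n^α sup_{m ∈ ℤ} P(X_n - g_n = m) < ∞`, then the law of `X` is absolutely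
continuous with a density bounded by `K`. -/
theorem density_lemma {Ω : Type*} [m0 : MeasurableSpace Ω] (μ : Measure Ω)
    [IsProbabilityMeasure μ]
    (X : ℕ → Ω → ℝ) (g : ℕ → ℝ)
    (hint : ∀ n, 1 ≤ n → ∀ ω, ∃ z : ℤ, X n ω - g n = (z : ℝ))
    (α : ℝ) (hα : 0 < α)
    (Xlim : Ω → ℝ) (hXlim : Measurable Xlim)
    (hconv : TendstoInDistribution μ (fun n ω => (n : ℝ) ^ (-α) * X n ω) (μ.map Xlim))
    (K : ℝ≥0∞)
    (hK : K = Filter.liminf (fun n : ℕ =>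
        ENNReal.ofReal ((n : ℝ) ^ α) * ⨆ z : ℤ, μ {ω | X n ω - g n = (z : ℝ)}) atTop)
    (hKfin : K < ⊤) :
    μ.map Xlim ≪ volume ∧
    ∃ f : ℝ → ℝ, (∀ x, 0 ≤ f x) ∧ (∀ x, f x ≤ K.toReal) ∧
      μ.map Xlim = volume.withDensity fun x => ENNReal.ofReal (f x) := by
  have : IsProbabilityMeasure (μ.map Xlim) := Measure.isProbabilityMeasure_map hXlim.aemeasurable
  lift K to ℝ≥0 using hKfin.ne
  have hs : Tendsto (fun n : ℕ => (n : ℝ) ^ α) atTop atTop :=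
    (tendsto_rpow_atTop hα).comp tendsto_natCast_atTop_atTop
  have hscaled : ∀ f : ℝ →ᵇ ℝ, Tendsto (fun n : ℕ => ∫ ω, f (((n : ℝ) ^ α)⁻¹ * X n ω) ∂μ)
      atTop (𝓝 (∫ x, f x ∂μ.map Xlim)) := fun f => by
    simpa only [← Real.rpow_neg (Nat.cast_nonneg _)] using hconv f
  have hIoc : ∀ a b, a ≤ b → μ.map Xlim (Ioc a b) ≤ K * ENNReal.ofReal (b - a) := by
    intro a b hab
    refine ENNReal.le_mul_ofReal_of_forall_pos_le fun δ hδ => ?_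
    calc μ.map Xlim (Ioc a b) ≤ μ.map Xlim (Icc a b) := measure_mono Ioc_subset_Icc_self
      _ ≤ ENNReal.ofReal (b + δ / 2 - (a - δ / 2)) * K :=
        hK ▸ measure_le_ofReal_mul_liminf_maxLatticeMass (eventually_atTop.2 ⟨1, hint⟩) hs
          hscaled (hK ▸ coe_ne_top) isClosed_Icc (by linarith)
          (Icc_subset_Ioo (by linarith) (by linarith))
      _ = K * ENNReal.ofReal (b - a + δ) := by rw [mul_comm]; ring_nf
  have hle := measure_le_smul_volume_of_measure_Ioc_le hIoc
  obtain ⟨f, hf0, hfK, hf⟩ := Measure.exists_density_le_of_le_smul hle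
  exact ⟨Measure.absolutelyContinuous_of_le_smul hle, f, hf0, hfK, hf⟩
end
end
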